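/- arXiv:2506.23148 — 5 statements merged into one kernel-verified Lean document; each statement's English description precedes it below -/
import Mathlib

section
/- Let S = {(0,0),(0,1),(0,2),(1,2),(1,3),(2,2),(2,3),(3,0)}. The mesh patterns q1 = (123, S) and q2 = (132, S) are jointly equidistributed. -/
/-- The boundary-extended sequence of positions of a candidate occurrence:
`posExt i 0 = 0`, `posExt i a = i (a-1) + 1` (1-based position) for `1 ≤ a ≤ m`,
and `posExt i (m+1) = n + 1`. -/
def posExt {m n : ℕ} (i : Fin m → Fin n) : ℕ → ℕ := fun a =>
  if h : 1 ≤ a ∧ a ≤ m then ((i ⟨a - 1, by omega⟩ : Fin n) : ℕ) + 1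
  else if a = 0 then 0 else n + 1

/-- The boundary-extended increasing rearrangement of the values of a candidate
occurrence: `valExt τ π i 0 = 0`, `valExt τ π i b = π (i (τ⁻¹ (b-1))) + 1`
(the `b`-th smallest value, 1-based) for `1 ≤ b ≤ m`, and `valExt τ π i (m+1) = n + 1`. -/
def valExt {m n : ℕ} (τ : Equiv.Perm (Fin m)) (π : Equiv.Perm (Fin n))
    (i : Fin m → Fin n) : ℕ → ℕ := fun b =>
  if h : 1 ≤ b ∧ b ≤ m then ((π (i (τ.symm ⟨b - 1, by omega⟩)) : Fin n) : ℕ) + 1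
  else if b = 0 then 0 else n + 1

/-- `i : Fin m → Fin n` is an occurrence of the mesh pattern `(τ, R)` in the
permutation `π` of `{1, …, n}` (positions and values are taken 1-based via `+1`). -/
def IsMeshOcc {m n : ℕ} (τ : Equiv.Perm (Fin m)) (R : Set (ℕ × ℕ))
    (π : Equiv.Perm (Fin n)) (i : Fin m → Fin n) : Prop :=
  StrictMono i ∧
  (∀ a b : Fin m, π (i a) < π (i b) ↔ τ a < τ b) ∧
  ∀ a b : ℕ, (a, b) ∈ R →
    ¬ ∃ j : Fin n,
        posExt i a < (j : ℕ) + 1 ∧ (j : ℕ) + 1 < posExt i (a + 1) ∧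
        valExt τ π i b < ((π j : Fin n) : ℕ) + 1 ∧
        ((π j : Fin n) : ℕ) + 1 < valExt τ π i (b + 1)

/-- The number of occurrences of the mesh pattern `(τ, R)` in `π`. -/
noncomputable def occ {m n : ℕ} (τ : Equiv.Perm (Fin m)) (R : Set (ℕ × ℕ))
    (π : Equiv.Perm (Fin n)) : ℕ :=
  Nat.card {i : Fin m → Fin n // IsMeshOcc τ R π i}

/-- Mesh patterns `(τ₁, R₁)` and `(τ₂, R₂)` are jointly equidistributed. -/
def JointlyEquidistributed {m₁ m₂ : ℕ} (τ₁ : Equiv.Perm (Fin m₁)) (R₁ : Set (ℕ × ℕ))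
    (τ₂ : Equiv.Perm (Fin m₂)) (R₂ : Set (ℕ × ℕ)) : Prop :=
  ∀ n k ℓ : ℕ,
    Nat.card {π : Equiv.Perm (Fin n) // occ τ₁ R₁ π = k ∧ occ τ₂ R₂ π = ℓ} =
    Nat.card {π : Equiv.Perm (Fin n) // occ τ₁ R₁ π = ℓ ∧ occ τ₂ R₂ π = k}

/-- The pattern 123 (identity on three letters). -/
def perm123 : Equiv.Perm (Fin 3) := 1

/-- The pattern 132 (0-indexed: `0 ↦ 0`, `1 ↦ 2`, `2 ↦ 1`). -/
def perm132 : Equiv.Perm (Fin 3) := Equiv.swap 1 2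

/-- The pattern 12 (identity on two letters). -/
def perm12 : Equiv.Perm (Fin 2) := 1

/-- The pattern 21. -/
def perm21 : Equiv.Perm (Fin 2) := Equiv.swap 0 1

/-- The unsigned Stirling numbers of the first kind. -/
def stirlingFirst : ℕ → ℕ → ℕ
  | 0, 0 => 1
  | 0, _ + 1 => 0
  | _ + 1, 0 => 0
  | n + 1, k + 1 => n * stirlingFirst n (k + 1) + stirlingFirst n k

/-!
An occurrence of either pattern is determined by its last entry `q`, and it is a `123` or a
`132` according to whether `π p < π q`, where `x < p < q` are its positions. Swapping the values
at `p` and `q` flips the type of the occurrence ending at `q` and changes neither the existence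
nor the type of the occurrence ending at any other `q'`: the intervals `[x, q]` of two
occurrences are nested, so the swap either permutes positions inside one region of the other
occurrence or moves values in a way its shading cannot detect. Toggling every `q` in turn is
therefore a bijection of `S_n` exchanging the two occurrence counts.
-/

open Equiv Function

namespace MeshPattern

variable {n : ℕ}

theorem mul_swap_apply_of_ne {π : Perm (Fin n)} {a b j : Fin n} (ha : j ≠ a) (hb : j ≠ b) :
    (π * swap a b) j = π j := by
  rw [Perm.mul_apply, swap_apply_of_ne_of_ne ha hb]

/-- `x < p < q` are the positions of an occurrence of `(123, S)` or of `(132, S)`, with the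
shaded boxes of `S` spelled out; the two patterns only differ in the order of `π p` and `π q`. -/
structure IsCore (π : Perm (Fin n)) (x p q : Fin n) : Prop where
  lt_mid : x < p
  mid_lt : p < q
  lt_val_mid : π x < π p
  lt_val_right : π x < π q
  before : ∀ j < x, π p < π j ∧ π q < π j
  between : ∀ j, x < j → j < q → j ≠ p → π j < π p ∧ π j < π q
  after : ∀ j, q < j → π x < π j

theorem isCore_iff {π : Perm (Fin n)} {x p q : Fin n} :
    IsCore π x p q ↔ x < p ∧ p < q ∧ π x < π p ∧ π x < π q ∧ ∀ j,
      (j < x → π p < π j ∧ π q < π j) ∧ (x < j → j < q → j ≠ p → π j < π p ∧ π j < π q) ∧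
      (q < j → π x < π j) :=
  ⟨fun ⟨h₁, h₂, h₃, h₄, h₅, h₆, h₇⟩ => ⟨h₁, h₂, h₃, h₄, fun j => ⟨h₅ j, h₆ j, h₇ j⟩⟩,
    fun ⟨h₁, h₂, h₃, h₄, h⟩ => ⟨h₁, h₂, h₃, h₄, fun j => (h j).1, fun j => (h j).2.1,
      fun j => (h j).2.2⟩⟩

namespace IsCore

variable {π : Perm (Fin n)} {x p q x' p' q' : Fin n}

theorem unique (h : IsCore π x p q) (h' : IsCore π x' p' q) : x = x' ∧ p = p' := by
  obtain rfl : x = x' := by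
    rcases lt_trichotomy x x' with hlt | he | hgt
    · have := h'.before x hlt; have := h.lt_val_right; omega
    · exact he
    · have := h.before x' hgt; have := h'.lt_val_right; omega
  refine ⟨rfl, ?_⟩
  by_contra hne
  have := h.between p' h'.lt_mid h'.mid_lt (Ne.symm hne)
  have := h'.between p h.lt_mid h.mid_lt hne
  omega

/-- The conditions on `p` and `q` only involve the pair of values `{π p, π q}`. -/
theorem mul_swap (h : IsCore π x p q) : IsCore (π * swap p q) x p q := by
  obtain ⟨hxp, hpq, hvp, hvq, before, between, after⟩ := h
  have hx : (π * swap p q) x = π x := mul_swap_apply_of_ne hxp.ne (hxp.trans hpq).ne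
  refine ⟨hxp, hpq, ?_, ?_, fun j hj => ?_, fun j h₁ h₂ hjp => ?_, fun j hj => ?_⟩
  · simpa [hx] using hvq
  · simpa [hx] using hvp
  · simpa [mul_swap_apply_of_ne (hj.trans hxp).ne (hj.trans (hxp.trans hpq)).ne, and_comm]
      using before j hj
  · simpa [mul_swap_apply_of_ne hjp h₂.ne, and_comm] using between j h₁ h₂ hjp
  · simpa [hx, mul_swap_apply_of_ne (hpq.trans hj).ne' hj.ne'] using after j hj

theorem lt_of_lt (h : IsCore π x p q) (h' : IsCore π x' p' q') (hx : x < x') : q' < q := by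
  have := h'.before x hx
  by_contra! hq
  rcases hq.lt_or_eq with hq | rfl
  · have := h.after q' hq; have := h'.lt_val_right; omega
  · have := h.lt_val_right; omega

/-- Relabelling positions inside each of the three regions cut out by `x` and `q`
preserves a core. -/
theorem mul_of_mapsTo (h : IsCore π x p q) {τ : Perm (Fin n)} {p₂ : Fin n} (hx : τ x = x)
    (hp : τ p₂ = p) (hq : τ q = q) (hlt : ∀ j, j < x ↔ τ j < x) (hgt : ∀ j, q < j ↔ q < τ j) :
    IsCore (π * τ) x p₂ q := by
  obtain ⟨hxp, hpq, hvp, hvq, before, between, after⟩ := h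
  have hne : ∀ {j k}, j ≠ k → τ j ≠ τ k := fun h => τ.injective.ne h
  have hx₂ : p₂ ≠ x := fun e => hxp.ne' (by rw [← hp, e, hx])
  have hq₂ : p₂ ≠ q := fun e => hpq.ne (by rw [← hp, e, hq])
  have h₁ := hlt p₂
  have h₂ := hgt p₂
  rw [hp] at h₁ h₂
  have hv : ∀ j, (π * τ) j = π (τ j) := fun _ => rfl
  refine ⟨by omega, by omega, by simpa [hv, hx, hp], by simpa [hv, hx, hq],
    fun j hj => by simpa [hv, hp, hq] using before _ ((hlt j).1 hj), fun j hj₁ hj₂ hjp => ?_,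
    fun j hj => by simpa [hv, hx] using after _ ((hgt j).1 hj)⟩
  have := hlt j
  have := hgt j
  have : τ j ≠ x := hx ▸ hne hj₁.ne'
  have : τ j ≠ q := hq ▸ hne hj₂.ne
  simpa [hv, hp, hq] using between _ (by omega) (by omega) (hp ▸ hne hjp)

theorem mul_swap_of_outer (h : IsCore π x p q) (h' : IsCore π x' p' q') (hq : q' < q)
    (hx : x ≤ x') (hp : p < x' ∨ p = p' ∨ p = q') :
    IsCore (π * swap p q) x' p' q' ∧
      ((π * swap p q) p' < (π * swap p q) q' ↔ π p' < π q') := by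
  obtain ⟨hxp, hpq, hvp, hvq, before, between, after⟩ := h
  have hσ : ∀ j, (π * swap p q) j = if j = p then π q else if j = q then π p else π j := by
    intro j; rw [Perm.mul_apply, swap_apply_def]; split_ifs <;> rfl
  have b₁ := between x'
  have b₂ := between p'
  have b₃ := between q'
  have c₁ := h'.before x
  have c₂ := h'.before p
  obtain ⟨hxp', hpq', hvp', hvq', before', between', after'⟩ := h'
  refine ⟨⟨hxp', hpq', ?_, ?_, fun j hj => ?_, fun j hj₁ hj₂ hjp => ?_, fun j hj => ?_⟩, ?_⟩
  · rcases hp with hp | rfl | rfl <;> simp only [hσ] <;> split_ifs <;> omega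
  · rcases hp with hp | rfl | rfl <;> simp only [hσ] <;> split_ifs <;> omega
  · have := before' j hj
    have := before j
    rcases hp with hp | rfl | rfl <;> simp only [hσ] <;> split_ifs <;> omega
  · have := between' j hj₁ hj₂ hjp
    have := between j
    rcases hp with hp | rfl | rfl <;> simp only [hσ] <;> split_ifs <;> omega
  · have := after' j hj
    rcases hp with hp | rfl | rfl <;> simp only [hσ] <;> split_ifs <;> omega
  · rcases hp with hp | rfl | rfl <;> simp only [hσ] <;> split_ifs <;> omega

theorem mul_swap_of_sameRegion (h : IsCore π x p q) {a b : Fin n} (hax : a ≠ x) (haq : a ≠ q)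
    (hbx : b ≠ x) (hbq : b ≠ q) (hlt : a < x ↔ b < x) (hgt : q < a ↔ q < b) :
    IsCore (π * swap a b) x (swap a b p) q := by
  refine h.mul_of_mapsTo (swap_apply_of_ne_of_ne hax.symm hbx.symm) (swap_apply_self a b p)
    (swap_apply_of_ne_of_ne haq.symm hbq.symm) (fun j => ?_) (fun j => ?_) <;>
  rw [swap_apply_def] <;> split_ifs <;> simp_all

theorem exists_mul_swap (h : IsCore π x p q) (h' : IsCore π x' p' q') (hq : q' ≠ q) :
    ∃ p'', IsCore (π * swap p q) x' p'' q' ∧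
      ((π * swap p q) p'' < (π * swap p q) q' ↔ π p' < π q') := by
  have hxp := h.lt_mid
  have hpq := h.mid_lt
  have hxp' := h'.lt_mid
  have hpq' := h'.mid_lt
  rcases hq.lt_or_gt with hq | hq
  · have hx : x ≤ x' := not_lt.1 fun hx => (h'.lt_of_lt h hx).asymm hq
    by_cases hp : p < x' ∨ p = p' ∨ p = q'
    · exact ⟨p', h.mul_swap_of_outer h' hq hx hp⟩
    have hqp : q' < p := by
      rcases eq_or_ne p x' with rfl | hpx
      · have := h'.before x hxp
        have := h'.lt_val_mid
        have := h.lt_val_mid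
        omega
      · have := h'.between p
        have := h.between p'
        omega
    have hp' : swap p q p' = p' := swap_apply_of_ne_of_ne (by omega) (by omega)
    refine ⟨p', hp' ▸ h'.mul_swap_of_sameRegion (by omega) (by omega) (by omega) (by omega)
      (by omega) (by omega), ?_⟩
    rw [Perm.mul_apply, Perm.mul_apply, hp', swap_apply_of_ne_of_ne (by omega) (by omega)]
  · have hx : x' ≤ x := not_lt.1 fun hx => (h.lt_of_lt h' hx).asymm hq
    refine ⟨swap p q p', h'.mul_swap_of_sameRegion (by omega) (by omega) (by omega) (by omega)
      (by omega) (by omega), ?_⟩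
    rw [Perm.mul_apply, Perm.mul_apply, swap_apply_self,
      swap_apply_of_ne_of_ne (by omega) (by omega)]

end IsCore

open Classical in
noncomputable def toggle (q : Fin n) (π : Perm (Fin n)) : Perm (Fin n) :=
  if h : ∃ x p, IsCore π x p q then π * swap h.choose_spec.choose q else π

section toggle

variable {π : Perm (Fin n)} {x p q : Fin n}

theorem toggle_of_isCore (h : IsCore π x p q) : toggle q π = π * swap p q := by
  have hex : ∃ x p, IsCore π x p q := ⟨x, p, h⟩
  rw [toggle, dif_pos hex, (hex.choose_spec.choose_spec.unique h).2]

theorem toggle_of_not (h : ¬∃ x p, IsCore π x p q) : toggle q π = π := dif_neg h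

theorem toggle_involutive (q : Fin n) : Involutive (toggle q) := by
  intro π
  by_cases hex : ∃ x p, IsCore π x p q
  · obtain ⟨x, p, h⟩ := hex
    rw [toggle_of_isCore h, toggle_of_isCore h.mul_swap, mul_assoc, swap_mul_self, mul_one]
  · rw [toggle_of_not hex, toggle_of_not hex]

def OccEndsAt (π : Perm (Fin n)) (asc : Bool) (q : Fin n) : Prop :=
  ∃ x p, IsCore π x p q ∧ (π p < π q ↔ asc)

theorem occEndsAt_iff (h : IsCore π x p q) {asc : Bool} :
    OccEndsAt π asc q ↔ (π p < π q ↔ asc) :=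
  ⟨fun ⟨_, _, h', hasc⟩ => by obtain ⟨rfl, rfl⟩ := h.unique h'; exact hasc,
    fun hasc => ⟨x, p, h, hasc⟩⟩

theorem occEndsAt_toggle_self (asc : Bool) :
    OccEndsAt (toggle q π) asc q ↔ OccEndsAt π (!asc) q := by
  by_cases hex : ∃ x p, IsCore π x p q
  · obtain ⟨x, p, h⟩ := hex
    rw [toggle_of_isCore h, occEndsAt_iff h.mul_swap, occEndsAt_iff h]
    have hne : π p ≠ π q := π.injective.ne h.mid_lt.ne
    simp only [Perm.mul_apply, swap_apply_left, swap_apply_right]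
    cases asc <;> simp <;> omega
  · rw [toggle_of_not hex]
    exact iff_of_false (fun ⟨x, p, h, _⟩ => hex ⟨x, p, h⟩) (fun ⟨x, p, h, _⟩ => hex ⟨x, p, h⟩)

theorem occEndsAt_toggle_of_ne {q' : Fin n} (hq : q' ≠ q) (asc : Bool) :
    OccEndsAt (toggle q π) asc q' ↔ OccEndsAt π asc q' := by
  have key : ∀ π, OccEndsAt π asc q' → OccEndsAt (toggle q π) asc q' := by
    rintro π ⟨x', p', h', hasc⟩
    by_cases hex : ∃ x p, IsCore π x p q
    · obtain ⟨x, p, h⟩ := hex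
      obtain ⟨p'', h'', hiff⟩ := h.exists_mul_swap h' hq
      rw [toggle_of_isCore h]
      exact ⟨x', p'', h'', hiff.trans hasc⟩
    · rw [toggle_of_not hex]
      exact ⟨x', p', h', hasc⟩
  exact ⟨fun h => toggle_involutive q π ▸ key _ h, key π⟩

end toggle

noncomputable def toggleAll (l : List (Fin n)) : Perm (Perm (Fin n)) :=
  (l.map fun q => Involutive.toPerm (toggle q) (toggle_involutive q)).prod

theorem occEndsAt_toggleAll {l : List (Fin n)} (hl : l.Nodup) (π : Perm (Fin n)) (asc : Bool)
    (q : Fin n) :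
    OccEndsAt (toggleAll l π) asc q ↔ OccEndsAt π (if q ∈ l then !asc else asc) q := by
  induction l generalizing asc with
  | nil => simp [toggleAll]
  | cons a l ih =>
    rw [List.nodup_cons] at hl
    have : toggleAll (a :: l) π = toggle a (toggleAll l π) := by
      simp [toggleAll, Perm.mul_apply]
    rw [this]
    by_cases hqa : q = a
    · subst hqa
      rw [occEndsAt_toggle_self, ih hl.2, if_neg hl.1, if_pos List.mem_cons_self]
    · rw [occEndsAt_toggle_of_ne hqa, ih hl.2]
      simp [hqa]

def shading : Set (ℕ × ℕ) := {(0, 0), (0, 1), (0, 2), (1, 2), (1, 3), (2, 2), (2, 3), (3, 0)}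

theorem forall_shading_iff {α : Type*} (B : ℕ → ℕ → α → Prop) :
    (∀ a b, (a, b) ∈ shading → ¬∃ j, B a b j) ↔ ∀ j, ¬B 0 0 j ∧ ¬B 0 1 j ∧ ¬B 0 2 j ∧
      ¬B 1 2 j ∧ ¬B 1 3 j ∧ ¬B 2 2 j ∧ ¬B 2 3 j ∧ ¬B 3 0 j := by
  simp only [shading, Set.mem_insert_iff, Set.mem_singleton_iff, Prod.mk.injEq, not_exists]
  constructor
  · intro h j
    exact ⟨h 0 0 (by simp) j, h 0 1 (by simp) j, h 0 2 (by simp) j, h 1 2 (by simp) j,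
      h 1 3 (by simp) j, h 2 2 (by simp) j, h 2 3 (by simp) j, h 3 0 (by simp) j⟩
  · rintro h a b hab j
    obtain ⟨h00, h01, h02, h12, h13, h22, h23, h30⟩ := h j
    rcases hab with ⟨rfl, rfl⟩ | ⟨rfl, rfl⟩ | ⟨rfl, rfl⟩ | ⟨rfl, rfl⟩ | ⟨rfl, rfl⟩ | ⟨rfl, rfl⟩ |
      ⟨rfl, rfl⟩ | ⟨rfl, rfl⟩ <;> assumption

theorem posExt_fin_three (i : Fin 3 → Fin n) :
    posExt i 0 = 0 ∧ posExt i 1 = i 0 + 1 ∧ posExt i 2 = i 1 + 1 ∧ posExt i 3 = i 2 + 1 ∧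
      posExt i 4 = n + 1 :=
  ⟨rfl, rfl, rfl, rfl, rfl⟩

theorem isCore_iff_shading {π : Perm (Fin n)} {i : Fin 3 → Fin n} {v : ℕ → ℕ}
    (hv0 : v 0 = 0) (hv1 : v 1 = π (i 0) + 1) (hv2 : v 2 = min (π (i 1) : ℕ) (π (i 2)) + 1)
    (hv3 : v 3 = max (π (i 1) : ℕ) (π (i 2)) + 1) (hv4 : v 4 = n + 1) :
    IsCore π (i 0) (i 1) (i 2) ↔ i 0 < i 1 ∧ i 1 < i 2 ∧ π (i 0) < π (i 1) ∧ π (i 0) < π (i 2) ∧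
      ∀ a b, (a, b) ∈ shading → ¬∃ j : Fin n, posExt i a < j + 1 ∧ j + 1 < posExt i (a + 1) ∧
        v b < π j + 1 ∧ π j + 1 < v (b + 1) := by
  obtain ⟨e0, e1, e2, e3, e4⟩ := posExt_fin_three i
  rw [isCore_iff, forall_shading_iff]
  simp only [e0, e1, e2, e3, e4, hv0, hv1, hv2, hv3, hv4, Nat.reduceAdd, zero_add]
  refine and_congr_right fun h01 => and_congr_right fun h12 => and_congr_right fun hx1 =>
    and_congr_right fun hx2 => forall_congr' fun j => ?_
  have := (π.injective.ne_iff (x := j) (y := i 0))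
  have := (π.injective.ne_iff (x := j) (y := i 1))
  have := (π.injective.ne_iff (x := j) (y := i 2))
  have := (π j).isLt
  constructor
  · rintro ⟨hb, hm, ha⟩
    refine ⟨?_, ?_, ?_, ?_, ?_, ?_, ?_, ?_⟩ <;> omega
  · rintro ⟨h00, h01, h02, h12, h13, h22, h23, h30⟩
    refine ⟨fun hj => ?_, fun hj₁ hj₂ hjp => ?_, fun hj => ?_⟩
    · clear h12 h13 h22 h23 h30; omega
    · clear h00 h01 h02 h30; omega
    · clear h00 h01 h02 h12 h13 h22 h23; omega

theorem valExt_perm123 (π : Perm (Fin n)) (i : Fin 3 → Fin n) :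
    valExt perm123 π i 0 = 0 ∧ valExt perm123 π i 1 = π (i 0) + 1 ∧
      valExt perm123 π i 2 = π (i 1) + 1 ∧ valExt perm123 π i 3 = π (i 2) + 1 ∧
      valExt perm123 π i 4 = n + 1 :=
  ⟨rfl, rfl, rfl, rfl, rfl⟩

theorem valExt_perm132 (π : Perm (Fin n)) (i : Fin 3 → Fin n) :
    valExt perm132 π i 0 = 0 ∧ valExt perm132 π i 1 = π (i 0) + 1 ∧
      valExt perm132 π i 2 = π (i 2) + 1 ∧ valExt perm132 π i 3 = π (i 1) + 1 ∧
      valExt perm132 π i 4 = n + 1 :=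
  ⟨rfl, rfl, rfl, rfl, rfl⟩

theorem strictMono_fin_three_iff (i : Fin 3 → Fin n) : StrictMono i ↔ i 0 < i 1 ∧ i 1 < i 2 := by
  simp [Fin.strictMono_iff_lt_succ, Fin.forall_fin_succ]

theorem forall_lt_iff_perm123 (g : Fin 3 → Fin n) :
    (∀ a b, g a < g b ↔ perm123 a < perm123 b) ↔ g 0 < g 1 ∧ g 1 < g 2 := by
  refine ⟨fun h => ⟨(h 0 1).2 (by decide), (h 1 2).2 (by decide)⟩, fun ⟨h₁, h₂⟩ a b => ?_⟩
  fin_cases a <;> fin_cases b <;> simp [perm123] <;> omega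

theorem forall_lt_iff_perm132 (g : Fin 3 → Fin n) :
    (∀ a b, g a < g b ↔ perm132 a < perm132 b) ↔ g 0 < g 2 ∧ g 2 < g 1 := by
  refine ⟨fun h => ⟨(h 0 2).2 (by decide), (h 2 1).2 (by decide)⟩, fun ⟨h₁, h₂⟩ a b => ?_⟩
  fin_cases a <;> fin_cases b <;> simp [perm132, swap_apply_def] <;> omega

theorem isMeshOcc_perm123_iff (π : Perm (Fin n)) (i : Fin 3 → Fin n) :
    IsMeshOcc perm123 shading π i ↔ IsCore π (i 0) (i 1) (i 2) ∧ (π (i 1) < π (i 2) ↔ true) := by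
  obtain ⟨e0, e1, e2, e3, e4⟩ := valExt_perm123 π i
  rw [IsMeshOcc, strictMono_fin_three_iff, forall_lt_iff_perm123 fun a => π (i a)]
  simp only [iff_true]
  constructor
  · rintro ⟨⟨h01, h12⟩, ⟨hv01, hv12⟩, hshade⟩
    exact ⟨(isCore_iff_shading e0 e1 (by omega) (by omega) e4).2
      ⟨h01, h12, hv01, hv01.trans hv12, hshade⟩, hv12⟩
  · rintro ⟨h, hv12⟩
    obtain ⟨h01, h12, hv01, -, hshade⟩ := (isCore_iff_shading e0 e1 (by omega) (by omega) e4).1 h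
    exact ⟨⟨h01, h12⟩, ⟨hv01, hv12⟩, hshade⟩

theorem isMeshOcc_perm132_iff (π : Perm (Fin n)) (i : Fin 3 → Fin n) :
    IsMeshOcc perm132 shading π i ↔ IsCore π (i 0) (i 1) (i 2) ∧ (π (i 1) < π (i 2) ↔ false) := by
  obtain ⟨e0, e1, e2, e3, e4⟩ := valExt_perm132 π i
  rw [IsMeshOcc, strictMono_fin_three_iff, forall_lt_iff_perm132 fun a => π (i a)]
  simp only [Bool.false_eq_true, iff_false, not_lt]
  constructor
  · rintro ⟨⟨h01, h12⟩, ⟨hv02, hv21⟩, hshade⟩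
    exact ⟨(isCore_iff_shading e0 e1 (by omega) (by omega) e4).2
      ⟨h01, h12, hv02.trans hv21, hv02, hshade⟩, hv21.le⟩
  · rintro ⟨h, hv21⟩
    have hv21 : π (i 2) < π (i 1) := lt_of_le_of_ne hv21 (π.injective.ne h.mid_lt.ne')
    obtain ⟨h01, h12, -, hv02, hshade⟩ :=
      (isCore_iff_shading e0 e1 (by omega) (by omega) e4).1 h
    exact ⟨⟨h01, h12⟩, ⟨hv02, hv21⟩, hshade⟩

theorem occ_eq_card {τ : Perm (Fin 3)} {asc : Bool} {π : Perm (Fin n)}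
    (hτ : ∀ i, IsMeshOcc τ shading π i ↔ IsCore π (i 0) (i 1) (i 2) ∧ (π (i 1) < π (i 2) ↔ asc)) :
    occ τ shading π = Nat.card {q // OccEndsAt π asc q} := by
  refine Nat.card_congr (Equiv.ofBijective (fun i => ⟨i.1 2, i.1 0, i.1 1, (hτ i.1).1 i.2⟩)
    ⟨fun ⟨i, hi⟩ ⟨i', hi'⟩ he => ?_, fun ⟨q, x, p, h, hasc⟩ => ?_⟩)
  · have h2 : i 2 = i' 2 := congrArg Subtype.val he
    have h' := ((hτ i').1 hi').1
    rw [← h2] at h'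
    obtain ⟨h0, h1⟩ := ((hτ i).1 hi).1.unique h'
    exact Subtype.ext (funext fun a => by fin_cases a <;> assumption)
  · exact ⟨⟨![x, p, q], (hτ _).2 ⟨h, hasc⟩⟩, rfl⟩

theorem occ_toggleAll (π : Perm (Fin n)) :
    occ perm123 shading (toggleAll (List.finRange n) π) = occ perm132 shading π ∧
      occ perm132 shading (toggleAll (List.finRange n) π) = occ perm123 shading π := by
  simp only [occ_eq_card (isMeshOcc_perm123_iff _), occ_eq_card (isMeshOcc_perm132_iff _)]
  have := occEndsAt_toggleAll (List.nodup_finRange n) π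
  simp only [List.mem_finRange, if_true] at this
  exact ⟨Nat.card_congr (Equiv.subtypeEquivRight fun q => this true q),
    Nat.card_congr (Equiv.subtypeEquivRight fun q => this false q)⟩

end MeshPattern

theorem statement_14 :
    JointlyEquidistributed perm123 ({(0, 0), (0, 1), (0, 2), (1, 2), (1, 3), (2, 2), (2, 3), (3, 0)} : Set (ℕ × ℕ))
      perm132 ({(0, 0), (0, 1), (0, 2), (1, 2), (1, 3), (2, 2), (2, 3), (3, 0)} : Set (ℕ × ℕ)) := by
  change JointlyEquidistributed perm123 MeshPattern.shading perm132 MeshPattern.shading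
  intro n k ℓ
  refine Nat.card_congr ((MeshPattern.toggleAll (List.finRange n)).subtypeEquiv fun π => ?_)
  rw [(MeshPattern.occ_toggleAll π).1, (MeshPattern.occ_toggleAll π).2]
  exact and_comm
end

section
/- Let S = {(0,0),(0,1),(0,3),(1,1),(1,3),(2,0),(2,1),(2,2),(2,3),(3,3)}. The mesh patterns q1 = (123, S) and q2 = (132, S) are jointly equidistributed. -/
open Equiv Finset

theorem exists_lt_and_lt_succ_of_forall_ne {g : ℕ → ℕ} {x : ℕ} (m : ℕ) (h0 : g 0 < x)
    (hm : x < g (m + 1)) (hne : ∀ a ≤ m, g a ≠ x) : ∃ a ≤ m, g a < x ∧ x < g (a + 1) := by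
  induction m with
  | zero => exact ⟨0, le_rfl, h0, hm⟩
  | succ m ih =>
    by_cases hx : x < g (m + 1)
    · obtain ⟨a, ha, h⟩ := ih hx fun a ha => hne a (by omega)
      exact ⟨a, by omega, h⟩
    · exact ⟨m + 1, le_rfl, lt_of_le_of_ne (not_lt.1 hx) (hne _ le_rfl), hm⟩

section posExt

variable {m n : ℕ} (f : Fin m → Fin n)

@[simp]
theorem posExt_zero : posExt f 0 = 0 := by
  simp [posExt]

@[simp]
theorem posExt_succ (c : Fin m) : posExt f (c + 1) = f c + 1 := by
  simp [posExt, c.isLt]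

theorem posExt_of_lt {a : ℕ} (ha : m < a) : posExt f a = n + 1 := by
  simp only [posExt]
  rw [dif_neg (by omega), if_neg (by omega)]

variable {f}

theorem posExt_monotone (hf : Monotone f) : Monotone (posExt f) := by
  intro a b hab
  simp only [posExt]
  split_ifs <;> first
    | omega
    | (have := hf (show (⟨a - 1, by omega⟩ : Fin m) ≤ ⟨b - 1, by omega⟩ from
          Fin.mk_le_mk.2 (by omega)); simp only [Fin.le_def] at this; omega)

theorem exists_posExt_lt_lt {x : Fin n} (hx : x ∉ Set.range f) :
    ∃ a ≤ m, posExt f a < x + 1 ∧ x + 1 < posExt f (a + 1) := by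
  refine exists_lt_and_lt_succ_of_forall_ne m (by simp) ?_ fun a ha hfa => ?_
  · rw [posExt_of_lt f (by omega)]
    omega
  · cases a with
    | zero => simp at hfa
    | succ a =>
      rw [show a + 1 = (⟨a, by omega⟩ : Fin m) + 1 from rfl, posExt_succ, add_left_inj] at hfa
      exact hx ⟨_, Fin.ext hfa⟩

end posExt

section IsMeshOcc

variable {m n : ℕ} {τ : Perm (Fin m)} {R : Set (ℕ × ℕ)} {π : Perm (Fin n)} {i : Fin m → Fin n}

theorem valExt_eq_posExt : valExt τ π i = posExt fun c => π (i (τ.symm c)) := rfl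

theorem IsMeshOcc.strictMono_values (h : IsMeshOcc τ R π i) :
    StrictMono fun c => π (i (τ.symm c)) :=
  fun c d hcd => (h.2.1 _ _).2 (by simpa using hcd)

theorem IsMeshOcc.valExt_monotone (h : IsMeshOcc τ R π i) : Monotone (valExt τ π i) :=
  posExt_monotone h.strictMono_values.monotone

theorem valExt_succ (c : Fin m) : valExt τ π i (c + 1) = π (i (τ.symm c)) + 1 :=
  posExt_succ (fun c => π (i (τ.symm c))) c

theorem valExt_succ_apply (c : Fin m) : valExt τ π i (τ c + 1) = π (i c) + 1 := by
  rw [valExt_succ, symm_apply_apply]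

theorem IsMeshOcc.apply_not_mem_row (h : IsMeshOcc τ R π i) (b : ℕ) (c : Fin m)
    (h1 : valExt τ π i b < π (i c) + 1) (h2 : π (i c) + 1 < valExt τ π i (b + 1)) : False :=
  h.valExt_monotone.ne_of_lt_of_lt_nat b h1 h2 _ (valExt_succ_apply c)

theorem IsMeshOcc.mul_swap (h : IsMeshOcc τ R π i) (a b : Fin m) :
    IsMeshOcc (τ * swap a b) R (π * swap (i a) (i b)) i := by
  have hi := h.1.injective
  have happ : ∀ c, (π * swap (i a) (i b)) (i c) = π (i (swap a b c)) := fun c => by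
    rw [Perm.mul_apply, hi.swap_apply]
  have hval : valExt (τ * swap a b) (π * swap (i a) (i b)) i = valExt τ π i := by
    simp only [valExt_eq_posExt, Perm.mul_def, symm_trans_apply, symm_swap]
    simp only [← Perm.mul_def, happ, swap_apply_self]
  refine ⟨h.1, fun c d => ?_, fun c d hcd ⟨j, h1, h2, h3, h4⟩ => ?_⟩
  · simpa only [happ, Perm.mul_apply] using h.2.1 (swap a b c) (swap a b d)
  -- The cells are unchanged, and the only entries that move are entries of the occurrence,
  -- which lie on the grid lines and hence in no cell.
  rw [hval] at h3 h4
  by_cases hj : j ∈ Set.range i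
  · obtain ⟨e, rfl⟩ := hj
    rw [happ] at h3 h4
    exact h.apply_not_mem_row d _ h3 h4
  · have hj' : (π * swap (i a) (i b)) j = π j := by
      rw [Perm.mul_apply, swap_apply_of_ne_of_ne (fun h => hj ⟨a, h.symm⟩) fun h => hj ⟨b, h.symm⟩]
    rw [hj'] at h3 h4
    exact h.2.2 c d hcd ⟨j, h1, h2, h3, h4⟩

theorem IsMeshOcc.le_valExt_of_top_row_shaded (h : IsMeshOcc τ R π i) (hR : ∀ a ≤ m, (a, m) ∈ R)
    (j : Fin n) : π j + 1 ≤ valExt τ π i m := by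
  by_contra! hlt
  by_cases hj : j ∈ Set.range i
  · obtain ⟨c, rfl⟩ := hj
    have := h.valExt_monotone (show τ c + 1 ≤ m by omega)
    rw [valExt_succ_apply] at this
    omega
  · obtain ⟨a, ha, h1, h2⟩ := exists_posExt_lt_lt hj
    refine h.2.2 a m (hR a ha) ⟨j, h1, h2, hlt, ?_⟩
    rw [valExt_eq_posExt, posExt_of_lt _ (by omega)]
    omega

theorem IsMeshOcc.not_mem_shaded_column (h : IsMeshOcc τ R π i) {a : ℕ} (hR : ∀ b ≤ m, (a, b) ∈ R)
    (j : Fin n) (h1 : posExt i a < j + 1) (h2 : j + 1 < posExt i (a + 1)) : False := by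
  by_cases hj : j ∈ Set.range i
  · obtain ⟨c, rfl⟩ := hj
    exact (posExt_monotone h.1.monotone).ne_of_lt_of_lt_nat a h1 h2 _ (posExt_succ i c)
  · have hv : π j ∉ Set.range fun c => π (i (τ.symm c)) := by
      rintro ⟨c, hc⟩
      exact hj ⟨_, π.injective hc⟩
    obtain ⟨b, hb, h3, h4⟩ := exists_posExt_lt_lt hv
    exact h.2.2 a b (hR b hb) ⟨j, h1, h2, h3, h4⟩

theorem occ_le_one_of_unique (h : ∀ i i', IsMeshOcc τ R π i → IsMeshOcc τ R π i' → i = i') :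
    occ τ R π ≤ 1 :=
  Finite.card_le_one_iff_subsingleton.2 ⟨fun x y => Subtype.ext (h _ _ x.2 y.2)⟩

end IsMeshOcc

theorem sum_occ_mul_swap {m : ℕ} (τ : Perm (Fin m)) (R : Set (ℕ × ℕ)) (a b : Fin m) (n : ℕ) :
    ∑ π : Perm (Fin n), occ (τ * swap a b) R π = ∑ π : Perm (Fin n), occ τ R π := by
  simp only [occ, ← Nat.card_sigma]
  refine Nat.card_congr
    { toFun := fun p => ⟨p.1 * swap (p.2.1 a) (p.2.1 b), p.2.1, by
        simpa only [mul_swap_mul_self] using p.2.2.mul_swap a b⟩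
      invFun := fun p => ⟨p.1 * swap (p.2.1 a) (p.2.1 b), p.2.1, p.2.2.mul_swap a b⟩
      left_inv := fun p => Sigma.subtype_ext (mul_swap_mul_self _ _ _) rfl
      right_inv := fun p => Sigma.subtype_ext (mul_swap_mul_self _ _ _) rfl }

theorem card_and_eq_card_and_comm_of_sum_eq {α : Type*} [Fintype α] {f g : α → ℕ}
    (hf : ∀ x, f x ≤ 1) (hg : ∀ x, g x ≤ 1) (h : ∑ x, f x = ∑ x, g x) (k ℓ : ℕ) :
    Nat.card {x // f x = k ∧ g x = ℓ} = Nat.card {x // f x = ℓ ∧ g x = k} := by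
  classical
  simp only [Nat.card_eq_fintype_card, Fintype.card_subtype]
  have hsum : ∀ u v : α → ℕ, (∀ x, u x ≤ 1) → (∀ x, v x ≤ 1) →
      ∑ x, u x = #{x | u x = 1 ∧ v x = 0} + #{x | u x = 1 ∧ v x = 1} := by
    intro u v hu hv
    rw [card_filter, card_filter, ← sum_add_distrib]
    refine sum_congr rfl fun x _ => ?_
    have := hu x
    have := hv x
    split_ifs <;> omega
  have hcomm : ∀ p q : ℕ, #{x | g x = p ∧ f x = q} = #{x | f x = q ∧ g x = p} := fun p q => by
    simp only [and_comm]
  have key : #{x | f x = 1 ∧ g x = 0} = #{x | f x = 0 ∧ g x = 1} := by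
    have := hsum f g hf hg
    have := hsum g f hg hf
    rw [hcomm, hcomm 1 1] at this
    omega
  have hempty : ∀ p q, 2 ≤ p ∨ 2 ≤ q → #{x | f x = p ∧ g x = q} = 0 := fun p q hpq => by
    rw [card_eq_zero, filter_eq_empty_iff]
    rintro x - ⟨rfl, rfl⟩
    have := hf x
    have := hg x
    omega
  rcases (by omega : k = ℓ ∨ (k = 1 ∧ ℓ = 0) ∨ (k = 0 ∧ ℓ = 1) ∨ 2 ≤ k ∨ 2 ≤ ℓ) with
    rfl | ⟨rfl, rfl⟩ | ⟨rfl, rfl⟩ | hk | hℓ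
  · rfl
  · exact key
  · exact key.symm
  · rw [hempty _ _ (.inl hk), hempty _ _ (.inr hk)]
  · rw [hempty _ _ (.inr hℓ), hempty _ _ (.inl hℓ)]

def shadingS : Set (ℕ × ℕ) :=
  {(0, 0), (0, 1), (0, 3), (1, 1), (1, 3), (2, 0), (2, 1), (2, 2), (2, 3), (3, 3)}

section shadingS

variable {n : ℕ} {τ : Perm (Fin 3)} {π : Perm (Fin n)} {i i' : Fin 3 → Fin n}

theorem IsMeshOcc.apply_two_eq_succ (h : IsMeshOcc τ shadingS π i) : (i 2 : ℕ) = i 1 + 1 := by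
  have hlt : (i 1 : ℕ) < i 2 := h.1 (by decide)
  have p2 : posExt i 2 = i 1 + 1 := posExt_succ i 1
  have p3 : posExt i 3 = i 2 + 1 := posExt_succ i 2
  by_contra hne
  refine h.not_mem_shaded_column (a := 2) (fun b hb => ?_) ⟨i 1 + 1, by omega⟩ ?_ ?_
  · interval_cases b <;> simp [shadingS]
  · simp only [p2]
    omega
  · simp only [p3]
    omega

/-- `τ.symm 2` is the index of the largest entry, whose value is forced to be `n`. -/
theorem IsMeshOcc.apply_symm_two_eq (h : IsMeshOcc τ shadingS π i)
    (h' : IsMeshOcc τ shadingS π i') : i (τ.symm 2) = i' (τ.symm 2) := by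
  have htop : ∀ a ≤ 3, (a, 3) ∈ shadingS := fun a ha => by
    interval_cases a <;> simp [shadingS]
  have hle := h.le_valExt_of_top_row_shaded htop (i' (τ.symm 2))
  have hge := h'.le_valExt_of_top_row_shaded htop (i (τ.symm 2))
  have v3 : ∀ k, valExt τ π k 3 = π (k (τ.symm 2)) + 1 := fun _ => valExt_succ 2
  rw [v3] at hle hge
  exact π.injective (Fin.ext (by omega))

/-- Otherwise `i' 0` would lie in the shaded cell `(0,1)` or `(1,1)` of `i`. -/
theorem IsMeshOcc.not_apply_zero_lt (hτ : τ 0 = 0) (h : IsMeshOcc τ shadingS π i)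
    (h' : IsMeshOcc τ shadingS π i') (h1 : i 1 = i' 1) (h2 : i 2 = i' 2) :
    ¬ π (i 0) < π (i' 0) := by
  intro hlt
  have hs : τ.symm 1 ≠ 0 := fun hs => by simpa [hτ] using congrArg τ hs
  have his : i (τ.symm 1) = i' (τ.symm 1) := by
    generalize τ.symm 1 = s at hs ⊢
    fin_cases s <;> simp_all
  have hv : π (i' 0) < π (i (τ.symm 1)) := his ▸ (h'.2.1 0 _).2 (by simp [hτ])
  have v1 : valExt τ π i 1 = π (i (τ.symm 0)) + 1 := valExt_succ 0
  rw [τ.symm_apply_eq.2 hτ.symm] at v1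
  have v2 : valExt τ π i 2 = π (i (τ.symm 1)) + 1 := valExt_succ 1
  have p1 : posExt i 1 = i 0 + 1 := posExt_succ i 0
  have p2 : posExt i 2 = i 1 + 1 := posExt_succ i 1
  have hpos : (i' 0 : ℕ) < i 1 := h1 ▸ h'.1 (by decide)
  have hne : (i' 0 : ℕ) ≠ i 0 := fun e => hlt.ne (by rw [Fin.ext e])
  rw [Fin.lt_def] at hlt hv
  rcases lt_or_gt_of_ne hne with hj | hj
  · refine h.2.2 0 1 (by simp [shadingS]) ⟨i' 0, ?_, ?_, ?_, ?_⟩ <;>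
      simp only [posExt_zero, p1, v1, v2] <;> omega
  · refine h.2.2 1 1 (by simp [shadingS]) ⟨i' 0, ?_, ?_, ?_, ?_⟩ <;>
      simp only [p1, p2, v1, v2] <;> omega

theorem IsMeshOcc.eq_of_shadingS (hτ : τ 0 = 0) (h : IsMeshOcc τ shadingS π i)
    (h' : IsMeshOcc τ shadingS π i') : i = i' := by
  have ht : τ.symm 2 ≠ 0 := fun ht => by simpa [hτ] using congrArg τ ht
  have hadj := h.apply_two_eq_succ
  have hadj' := h'.apply_two_eq_succ
  have htop := h.apply_symm_two_eq h'
  have h12 : i 1 = i' 1 ∧ i 2 = i' 2 := by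
    generalize τ.symm 2 = t at ht htop
    fin_cases t
    · exact absurd rfl ht
    · exact ⟨htop, Fin.ext (by simp_all)⟩
    · exact ⟨Fin.ext (by simp_all), htop⟩
  have h0 : π (i 0) = π (i' 0) :=
    le_antisymm (not_lt.1 (h'.not_apply_zero_lt hτ h h12.1.symm h12.2.symm))
      (not_lt.1 (h.not_apply_zero_lt hτ h' h12.1 h12.2))
  funext c
  fin_cases c
  exacts [π.injective h0, h12.1, h12.2]

end shadingS

theorem statement_15 :
    JointlyEquidistributed perm123 ({(0, 0), (0, 1), (0, 3), (1, 1), (1, 3), (2, 0), (2, 1), (2, 2), (2, 3), (3, 3)} : Set (ℕ × ℕ))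
      perm132 ({(0, 0), (0, 1), (0, 3), (1, 1), (1, 3), (2, 0), (2, 1), (2, 2), (2, 3), (3, 3)} : Set (ℕ × ℕ)) := by
  intro n k ℓ
  have h123 : perm123 * swap 1 2 = perm132 := one_mul _
  exact card_and_eq_card_and_comm_of_sum_eq
    (fun _ => occ_le_one_of_unique fun _ _ => IsMeshOcc.eq_of_shadingS (τ := perm123) rfl)
    (fun _ => occ_le_one_of_unique fun _ _ => IsMeshOcc.eq_of_shadingS (τ := perm132) rfl)
    (h123 ▸ sum_occ_mul_swap perm123 shadingS 1 2 n).symm k ℓ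
end

section
/- Let S = {(0,0),(0,1),(1,3),(2,0),(2,1),(2,2),(2,3),(3,0),(3,3)}. The mesh patterns q1 = (123, S) and q2 = (132, S) are jointly equidistributed. -/
namespace MeshAux

def Sset : Set (ℕ × ℕ) :=
  {(0, 0), (0, 1), (1, 3), (2, 0), (2, 1), (2, 2), (2, 3), (3, 0), (3, 3)}

variable {n : ℕ}

def P1 (π : Equiv.Perm (Fin n)) (u v w : Fin n) : Prop :=
  (u : ℕ) < v ∧ (w : ℕ) = (v : ℕ) + 1 ∧
  ((π u : Fin n) : ℕ) < π v ∧ ((π v : Fin n) : ℕ) < π w ∧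
  (∀ j : Fin n, (j : ℕ) < u → ((π v : Fin n) : ℕ) < π j) ∧
  (∀ j : Fin n, (u : ℕ) < j → (j : ℕ) < v → ((π j : Fin n) : ℕ) < π w) ∧
  (∀ j : Fin n, (w : ℕ) < j → ((π u : Fin n) : ℕ) < π j ∧ ((π j : Fin n) : ℕ) < π w)

section eval
variable (π : Equiv.Perm (Fin n)) (i : Fin 3 → Fin n)

lemma posExt_0 : posExt i 0 = 0 := by simp [posExt]
lemma posExt_1 : posExt i 1 = (i 0 : ℕ) + 1 := by norm_num [posExt]
lemma posExt_2 : posExt i 2 = (i 1 : ℕ) + 1 := by norm_num [posExt]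
lemma posExt_3 : posExt i 3 = (i 2 : ℕ) + 1 := by norm_num [posExt]; congr 1
lemma posExt_4 : posExt i 4 = n + 1 := by norm_num [posExt]

lemma valExt1_0 : valExt perm123 π i 0 = 0 := by simp [valExt]
lemma valExt1_1 : valExt perm123 π i 1 = ((π (i 0) : Fin n) : ℕ) + 1 := by
  have h : (perm123.symm 0 : Fin 3) = 0 := by decide
  simp [valExt, h]
lemma valExt1_2 : valExt perm123 π i 2 = ((π (i 1) : Fin n) : ℕ) + 1 := by
  have h : (perm123.symm 1 : Fin 3) = 1 := by decide
  simp [valExt, h]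
lemma valExt1_3 : valExt perm123 π i 3 = ((π (i 2) : Fin n) : ℕ) + 1 := by
  have h : (perm123.symm 2 : Fin 3) = 2 := by decide
  simp [valExt, h]
lemma valExt1_4 : valExt perm123 π i 4 = n + 1 := by norm_num [valExt]

lemma vne (π : Equiv.Perm (Fin n)) {j k : Fin n} (h : (j : ℕ) ≠ (k : ℕ)) :
    ((π j : Fin n) : ℕ) ≠ ((π k : Fin n) : ℕ) := by
  intro hc
  exact h (congrArg Fin.val (π.injective (Fin.ext hc)))

end eval

theorem isMeshOcc1_iff (π : Equiv.Perm (Fin n)) (i : Fin 3 → Fin n) :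
    IsMeshOcc perm123 Sset π i ↔ P1 π (i 0) (i 1) (i 2) := by
  constructor
  · rintro ⟨hsm, hpat, hmesh⟩
    have h01 : (i 0 : ℕ) < i 1 := hsm (show (0:Fin 3) < 1 by decide)
    have h12 : (i 1 : ℕ) < i 2 := hsm (show (1:Fin 3) < 2 by decide)
    have hv01 : ((π (i 0) : Fin n) : ℕ) < π (i 1) := (hpat 0 1).mpr (by decide)
    have hv12 : ((π (i 1) : Fin n) : ℕ) < π (i 2) := (hpat 1 2).mpr (by decide)
    have h00 := hmesh 0 0 (by simp [Sset])
    have h01' := hmesh 0 1 (by simp [Sset])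
    have h13 := hmesh 1 3 (by simp [Sset])
    have h20 := hmesh 2 0 (by simp [Sset])
    have h21 := hmesh 2 1 (by simp [Sset])
    have h22 := hmesh 2 2 (by simp [Sset])
    have h23 := hmesh 2 3 (by simp [Sset])
    have h30 := hmesh 3 0 (by simp [Sset])
    have h33 := hmesh 3 3 (by simp [Sset])
    simp only [Nat.reduceAdd, posExt_0, posExt_1, posExt_2, posExt_3, posExt_4,
      valExt1_0, valExt1_1, valExt1_2, valExt1_3, valExt1_4]
      at h00 h01' h13 h20 h21 h22 h23 h30 h33
    have hadj : (i 2 : ℕ) = (i 1 : ℕ) + 1 := by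
      by_contra hne
      have hlt : (i 1 : ℕ) + 1 < i 2 := by omega
      have hjn : (i 1 : ℕ) + 1 < n := lt_trans hlt (i 2).isLt
      set j : Fin n := ⟨(i 1 : ℕ) + 1, hjn⟩ with hj
      have hjv : (j : ℕ) = (i 1 : ℕ) + 1 := rfl
      have hne0 : ((π j : Fin n) : ℕ) ≠ π (i 0) := vne π (by omega)
      have hne1 : ((π j : Fin n) : ℕ) ≠ π (i 1) := vne π (by omega)
      have hne2 : ((π j : Fin n) : ℕ) ≠ π (i 2) := vne π (by omega)
      have hpn : ((π j : Fin n) : ℕ) < n := (π j).isLt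
      rcases Nat.lt_trichotomy ((π j : Fin n) : ℕ) ((π (i 0) : Fin n) : ℕ) with hA | hA | hA
      · exact h20 ⟨j, by omega⟩
      · exact hne0 hA
      · rcases Nat.lt_trichotomy ((π j : Fin n) : ℕ) ((π (i 1) : Fin n) : ℕ) with hB | hB | hB
        · exact h21 ⟨j, by omega⟩
        · exact hne1 hB
        · rcases Nat.lt_trichotomy ((π j : Fin n) : ℕ) ((π (i 2) : Fin n) : ℕ) with hC | hC | hC
          · exact h22 ⟨j, by omega⟩
          · exact hne2 hC
          · exact h23 ⟨j, by omega⟩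
    refine ⟨h01, hadj, hv01, hv12, ?_, ?_, ?_⟩
    · intro j hji
      have hne0 : ((π j : Fin n) : ℕ) ≠ π (i 0) := vne π (by omega)
      have hne1 : ((π j : Fin n) : ℕ) ≠ π (i 1) := vne π (by omega)
      by_contra hc
      rcases Nat.lt_trichotomy ((π j : Fin n) : ℕ) ((π (i 0) : Fin n) : ℕ) with hA | hA | hA
      · exact h00 ⟨j, by omega⟩
      · exact hne0 hA
      · exact h01' ⟨j, by omega⟩
    · intro j hju hjv
      have hne2 : ((π j : Fin n) : ℕ) ≠ π (i 2) := vne π (by omega)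
      have hpn : ((π j : Fin n) : ℕ) < n := (π j).isLt
      by_contra hc
      exact h13 ⟨j, by omega⟩
    · intro j hjw
      have hne0 : ((π j : Fin n) : ℕ) ≠ π (i 0) := vne π (by omega)
      have hne2 : ((π j : Fin n) : ℕ) ≠ π (i 2) := vne π (by omega)
      have hpn : ((π j : Fin n) : ℕ) < n := (π j).isLt
      have hjn : (j : ℕ) < n := j.isLt
      constructor
      · by_contra hc
        exact h30 ⟨j, by omega⟩
      · by_contra hc
        exact h33 ⟨j, by omega⟩
  · rintro ⟨h01, hadj, hv01, hv12, hpre, hmid, hsuf⟩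
    have fin3 : ∀ a : Fin 3, a = 0 ∨ a = 1 ∨ a = 2 := by decide
    have smi : StrictMono i := by
      have g01 : i 0 < i 1 := Fin.lt_def.mpr h01
      have g12 : i 1 < i 2 := Fin.lt_def.mpr (by omega)
      intro a b hab
      rcases fin3 a with rfl | rfl | rfl <;> rcases fin3 b with rfl | rfl | rfl <;>
        first
          | exact absurd hab (by decide)
          | exact g01
          | exact g12
          | exact lt_trans g01 g12
    have smv : StrictMono (fun a : Fin 3 => π (i a)) := by
      have g01 : π (i 0) < π (i 1) := Fin.lt_def.mpr hv01
      have g12 : π (i 1) < π (i 2) := Fin.lt_def.mpr hv12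
      intro a b hab
      rcases fin3 a with rfl | rfl | rfl <;> rcases fin3 b with rfl | rfl | rfl <;>
        first
          | exact absurd hab (by decide)
          | exact g01
          | exact g12
          | exact lt_trans g01 g12
    refine ⟨smi, ?_, ?_⟩
    · intro a b
      have : perm123 a < perm123 b ↔ a < b := by simp [perm123]
      rw [this]
      exact smv.lt_iff_lt
    · intro a b hab
      simp only [Sset, Set.mem_insert_iff, Set.mem_singleton_iff, Prod.mk.injEq] at hab
      have hn : ∀ j : Fin n, ((π j : Fin n) : ℕ) < n := fun j => (π j).isLt
      rcases hab with ⟨rfl, rfl⟩ | ⟨rfl, rfl⟩ | ⟨rfl, rfl⟩ | ⟨rfl, rfl⟩ | ⟨rfl, rfl⟩ |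
        ⟨rfl, rfl⟩ | ⟨rfl, rfl⟩ | ⟨rfl, rfl⟩ | ⟨rfl, rfl⟩ <;>
        simp only [Nat.reduceAdd, posExt_0, posExt_1, posExt_2, posExt_3, posExt_4,
          valExt1_0, valExt1_1, valExt1_2, valExt1_3, valExt1_4] <;>
        rintro ⟨j, hj1, hj2, hj3, hj4⟩
      · exact absurd hj4 (by have := hpre j (by omega); omega)
      · exact absurd hj4 (by have := hpre j (by omega); omega)
      · exact absurd hj4 (by have := hmid j (by omega) (by omega); omega)
      · omega
      · omega
      · omega
      · omega
      · exact absurd hj4 (by have := (hsuf j (by omega)).1; omega)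
      · exact absurd hj4 (by have := (hsuf j (by omega)).2; omega)

def P2 (π : Equiv.Perm (Fin n)) (u v w : Fin n) : Prop :=
  (u : ℕ) < v ∧ (w : ℕ) = (v : ℕ) + 1 ∧
  ((π u : Fin n) : ℕ) < π w ∧ ((π w : Fin n) : ℕ) < π v ∧
  (∀ j : Fin n, (j : ℕ) < u → ((π w : Fin n) : ℕ) < π j) ∧
  (∀ j : Fin n, (u : ℕ) < j → (j : ℕ) < v → ((π j : Fin n) : ℕ) < π v) ∧
  (∀ j : Fin n, (w : ℕ) < j → ((π u : Fin n) : ℕ) < π j ∧ ((π j : Fin n) : ℕ) < π v)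

section eval2
variable (π : Equiv.Perm (Fin n)) (i : Fin 3 → Fin n)

lemma valExt2_0 : valExt perm132 π i 0 = 0 := by simp [valExt]
lemma valExt2_1 : valExt perm132 π i 1 = ((π (i 0) : Fin n) : ℕ) + 1 := by
  have h : (perm132.symm 0 : Fin 3) = 0 := by decide
  simp [valExt, h]
lemma valExt2_2 : valExt perm132 π i 2 = ((π (i 2) : Fin n) : ℕ) + 1 := by
  have h : (perm132.symm 1 : Fin 3) = 2 := by decide
  simp [valExt, h]
lemma valExt2_3 : valExt perm132 π i 3 = ((π (i 1) : Fin n) : ℕ) + 1 := by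
  have h : (perm132.symm 2 : Fin 3) = 1 := by decide
  simp [valExt, h]
lemma valExt2_4 : valExt perm132 π i 4 = n + 1 := by norm_num [valExt]

end eval2

theorem isMeshOcc2_iff (π : Equiv.Perm (Fin n)) (i : Fin 3 → Fin n) :
    IsMeshOcc perm132 Sset π i ↔ P2 π (i 0) (i 1) (i 2) := by
  constructor
  · rintro ⟨hsm, hpat, hmesh⟩
    have h01 : (i 0 : ℕ) < i 1 := hsm (show (0:Fin 3) < 1 by decide)
    have h12 : (i 1 : ℕ) < i 2 := hsm (show (1:Fin 3) < 2 by decide)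
    have hv0 : ((π (i 0) : Fin n) : ℕ) < π (i 2) := (hpat 0 2).mpr (by decide)
    have hv1 : ((π (i 2) : Fin n) : ℕ) < π (i 1) := (hpat 2 1).mpr (by decide)
    have h00 := hmesh 0 0 (by simp [Sset])
    have h01' := hmesh 0 1 (by simp [Sset])
    have h13 := hmesh 1 3 (by simp [Sset])
    have h20 := hmesh 2 0 (by simp [Sset])
    have h21 := hmesh 2 1 (by simp [Sset])
    have h22 := hmesh 2 2 (by simp [Sset])
    have h23 := hmesh 2 3 (by simp [Sset])
    have h30 := hmesh 3 0 (by simp [Sset])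
    have h33 := hmesh 3 3 (by simp [Sset])
    simp only [Nat.reduceAdd, posExt_0, posExt_1, posExt_2, posExt_3, posExt_4,
      valExt2_0, valExt2_1, valExt2_2, valExt2_3, valExt2_4]
      at h00 h01' h13 h20 h21 h22 h23 h30 h33
    have hadj : (i 2 : ℕ) = (i 1 : ℕ) + 1 := by
      by_contra hne
      have hlt : (i 1 : ℕ) + 1 < i 2 := by omega
      have hjn : (i 1 : ℕ) + 1 < n := lt_trans hlt (i 2).isLt
      set j : Fin n := ⟨(i 1 : ℕ) + 1, hjn⟩ with hj
      have hjv : (j : ℕ) = (i 1 : ℕ) + 1 := rfl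
      have hne0 : ((π j : Fin n) : ℕ) ≠ π (i 0) := vne π (by omega)
      have hne1 : ((π j : Fin n) : ℕ) ≠ π (i 1) := vne π (by omega)
      have hne2 : ((π j : Fin n) : ℕ) ≠ π (i 2) := vne π (by omega)
      have hpn : ((π j : Fin n) : ℕ) < n := (π j).isLt
      rcases Nat.lt_trichotomy ((π j : Fin n) : ℕ) ((π (i 0) : Fin n) : ℕ) with hA | hA | hA
      · exact h20 ⟨j, by omega⟩
      · exact hne0 hA
      · rcases Nat.lt_trichotomy ((π j : Fin n) : ℕ) ((π (i 2) : Fin n) : ℕ) with hB | hB | hB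
        · exact h21 ⟨j, by omega⟩
        · exact hne2 hB
        · rcases Nat.lt_trichotomy ((π j : Fin n) : ℕ) ((π (i 1) : Fin n) : ℕ) with hC | hC | hC
          · exact h22 ⟨j, by omega⟩
          · exact hne1 hC
          · exact h23 ⟨j, by omega⟩
    refine ⟨h01, hadj, hv0, hv1, ?_, ?_, ?_⟩
    · intro j hji
      have hne0 : ((π j : Fin n) : ℕ) ≠ π (i 0) := vne π (by omega)
      have hne2 : ((π j : Fin n) : ℕ) ≠ π (i 2) := vne π (by omega)
      by_contra hc
      rcases Nat.lt_trichotomy ((π j : Fin n) : ℕ) ((π (i 0) : Fin n) : ℕ) with hA | hA | hA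
      · exact h00 ⟨j, by omega⟩
      · exact hne0 hA
      · exact h01' ⟨j, by omega⟩
    · intro j hju hjv
      have hne1 : ((π j : Fin n) : ℕ) ≠ π (i 1) := vne π (by omega)
      have hpn : ((π j : Fin n) : ℕ) < n := (π j).isLt
      by_contra hc
      exact h13 ⟨j, by omega⟩
    · intro j hjw
      have hne0 : ((π j : Fin n) : ℕ) ≠ π (i 0) := vne π (by omega)
      have hne1 : ((π j : Fin n) : ℕ) ≠ π (i 1) := vne π (by omega)
      have hpn : ((π j : Fin n) : ℕ) < n := (π j).isLt
      have hjn : (j : ℕ) < n := j.isLt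
      constructor
      · by_contra hc
        exact h30 ⟨j, by omega⟩
      · by_contra hc
        exact h33 ⟨j, by omega⟩
  · rintro ⟨h01, hadj, hv0, hv1, hpre, hmid, hsuf⟩
    have fin3 : ∀ a : Fin 3, a = 0 ∨ a = 1 ∨ a = 2 := by decide
    have smi : StrictMono i := by
      have g01 : i 0 < i 1 := Fin.lt_def.mpr h01
      have g12 : i 1 < i 2 := Fin.lt_def.mpr (by omega)
      intro a b hab
      rcases fin3 a with rfl | rfl | rfl <;> rcases fin3 b with rfl | rfl | rfl <;>
        first
          | exact absurd hab (by decide)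
          | exact g01
          | exact g12
          | exact lt_trans g01 g12
    have smv : StrictMono (fun a : Fin 3 => π (i (perm132.symm a))) := by
      have e0 : (perm132.symm 0 : Fin 3) = 0 := by decide
      have e1 : (perm132.symm 1 : Fin 3) = 2 := by decide
      have e2 : (perm132.symm 2 : Fin 3) = 1 := by decide
      have g01 : π (i (perm132.symm 0)) < π (i (perm132.symm 1)) := by
        rw [e0, e1]; exact Fin.lt_def.mpr hv0
      have g12 : π (i (perm132.symm 1)) < π (i (perm132.symm 2)) := by
        rw [e1, e2]; exact Fin.lt_def.mpr hv1
      intro a b hab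
      rcases fin3 a with rfl | rfl | rfl <;> rcases fin3 b with rfl | rfl | rfl <;>
        first
          | exact absurd hab (by decide)
          | exact g01
          | exact g12
          | exact lt_trans g01 g12
    refine ⟨smi, ?_, ?_⟩
    · intro a b
      have := smv.lt_iff_lt (a := perm132 a) (b := perm132 b)
      simpa using this
    · intro a b hab
      simp only [Sset, Set.mem_insert_iff, Set.mem_singleton_iff, Prod.mk.injEq] at hab
      have hn : ∀ j : Fin n, ((π j : Fin n) : ℕ) < n := fun j => (π j).isLt
      rcases hab with ⟨rfl, rfl⟩ | ⟨rfl, rfl⟩ | ⟨rfl, rfl⟩ | ⟨rfl, rfl⟩ | ⟨rfl, rfl⟩ |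
        ⟨rfl, rfl⟩ | ⟨rfl, rfl⟩ | ⟨rfl, rfl⟩ | ⟨rfl, rfl⟩ <;>
        simp only [Nat.reduceAdd, posExt_0, posExt_1, posExt_2, posExt_3, posExt_4,
          valExt2_0, valExt2_1, valExt2_2, valExt2_3, valExt2_4] <;>
        rintro ⟨j, hj1, hj2, hj3, hj4⟩
      · exact absurd hj4 (by have := hpre j (by omega); omega)
      · exact absurd hj4 (by have := hpre j (by omega); omega)
      · exact absurd hj4 (by have := hmid j (by omega) (by omega); omega)
      · omega
      · omega
      · omega
      · omega
      · exact absurd hj4 (by have := (hsuf j (by omega)).1; omega)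
      · exact absurd hj4 (by have := (hsuf j (by omega)).2; omega)

lemma fne {a b : Fin n} (h : (a : ℕ) ≠ (b : ℕ)) : a ≠ b :=
  fun hc => h (congrArg Fin.val hc)

lemma max1 {π : Equiv.Perm (Fin n)} {u v w : Fin n} (h : P1 π u v w) :
    ∀ j : Fin n, (u : ℕ) ≤ j → (j : ℕ) ≠ w → ((π j : Fin n) : ℕ) < π w := by
  obtain ⟨huv, hadj, hab, hbc, hpre, hmid, hsuf⟩ := h
  intro j hj hne
  by_cases h1 : (j : ℕ) = (u : ℕ)
  · rw [Fin.ext h1]; omega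
  by_cases h2 : (j : ℕ) = (v : ℕ)
  · rw [Fin.ext h2]; omega
  by_cases h3 : (j : ℕ) < (v : ℕ)
  · exact hmid j (by omega) h3
  · exact (hsuf j (by omega)).2

lemma max2 {π : Equiv.Perm (Fin n)} {u v w : Fin n} (h : P2 π u v w) :
    ∀ j : Fin n, (u : ℕ) ≤ j → (j : ℕ) ≠ v → ((π j : Fin n) : ℕ) < π v := by
  obtain ⟨huv, hadj, hab, hbc, hpre, hmid, hsuf⟩ := h
  intro j hj hne
  by_cases h1 : (j : ℕ) = (u : ℕ)
  · rw [Fin.ext h1]; omega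
  by_cases h2 : (j : ℕ) = (w : ℕ)
  · rw [Fin.ext h2]; omega
  by_cases h3 : (j : ℕ) < (v : ℕ)
  · exact hmid j (by omega) h3
  · exact (hsuf j (by omega)).2

lemma aux1 {π : Equiv.Perm (Fin n)} {u v w u' v' w' : Fin n}
    (h : P1 π u v w) (h' : P1 π u' v' w') (hlt : (u' : ℕ) < u) : False := by
  have hf := h; have hf' := h'
  obtain ⟨huv, hadj, hab, hbc, hpre, hmid, hsuf⟩ := h
  obtain ⟨huv', hadj', hab', hbc', hpre', hmid', hsuf'⟩ := h'
  by_cases hcase : (w' : ℕ) < u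
  · have h1 := hpre u' hlt
    have h2 := (hsuf' u (by omega)).1
    omega
  · by_cases hww : (w : ℕ) = (w' : ℕ)
    · have hvv : v = v' := Fin.ext (by omega)
      have p1 := hpre u' hlt
      rw [hvv] at p1
      omega
    · have q1 := max1 hf w' (by omega) (by omega)
      have q2 := max1 hf' w (by omega) (by omega)
      omega

lemma uniq1 {π : Equiv.Perm (Fin n)} {u v w u' v' w' : Fin n}
    (h : P1 π u v w) (h' : P1 π u' v' w') : u = u' ∧ v = v' ∧ w = w' := by
  have huu : (u : ℕ) = (u' : ℕ) := by
    rcases Nat.lt_trichotomy (u : ℕ) (u' : ℕ) with hc | hc | hc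
    · exact absurd (aux1 h' h hc) (by simp)
    · exact hc
    · exact absurd (aux1 h h' hc) (by simp)
  have hww : (w : ℕ) = (w' : ℕ) := by
    by_contra hne
    have q1 := max1 h w' (by have := h'.1; have := h'.2.1; omega) (by omega)
    have q2 := max1 h' w (by have := h.1; have := h.2.1; omega) (by omega)
    omega
  have hvv : (v : ℕ) = (v' : ℕ) := by have := h.2.1; have := h'.2.1; omega
  exact ⟨Fin.ext huu, Fin.ext hvv, Fin.ext hww⟩

lemma aux2 {π : Equiv.Perm (Fin n)} {u v w u' v' w' : Fin n}
    (h : P2 π u v w) (h' : P2 π u' v' w') (hlt : (u' : ℕ) < u) : False := by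
  have hf := h; have hf' := h'
  obtain ⟨huv, hadj, hab, hbc, hpre, hmid, hsuf⟩ := h
  obtain ⟨huv', hadj', hab', hbc', hpre', hmid', hsuf'⟩ := h'
  by_cases hvu : (u : ℕ) ≤ (v' : ℕ)
  · by_cases hvv : (v : ℕ) = (v' : ℕ)
    · have hww : w = w' := Fin.ext (by omega)
      have p1 := hpre u' hlt
      rw [hww] at p1
      omega
    · have q1 := max2 hf v' (by omega) (by omega)
      have q2 := max2 hf' v (by omega) (by omega)
      omega
  · by_cases hwu : (w' : ℕ) < u
    · have s1 := (hsuf' u (by omega)).1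
      have p1 := hpre u' hlt
      omega
    · have hww : w' = u := Fin.ext (by omega)
      rw [hww] at hab'
      have p1 := hpre u' hlt
      omega

lemma uniq2 {π : Equiv.Perm (Fin n)} {u v w u' v' w' : Fin n}
    (h : P2 π u v w) (h' : P2 π u' v' w') : u = u' ∧ v = v' ∧ w = w' := by
  have huu : (u : ℕ) = (u' : ℕ) := by
    rcases Nat.lt_trichotomy (u : ℕ) (u' : ℕ) with hc | hc | hc
    · exact absurd (aux2 h' h hc) (by simp)
    · exact hc
    · exact absurd (aux2 h h' hc) (by simp)
  have hvv : (v : ℕ) = (v' : ℕ) := by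
    by_contra hne
    have q1 := max2 h v' (by have := h'.1; omega) (by omega)
    have q2 := max2 h' v (by have := h.1; omega) (by omega)
    omega
  have hww : (w : ℕ) = (w' : ℕ) := by have := h.2.1; have := h'.2.1; omega
  exact ⟨Fin.ext huu, Fin.ext hvv, Fin.ext hww⟩

section swaps
variable {π : Equiv.Perm (Fin n)} {u v w : Fin n}

lemma swap12 (h : P1 π u v w) : P2 (π * Equiv.swap v w) u v w := by
  obtain ⟨huv, hadj, hab, hbc, hpre, hmid, hsuf⟩ := h
  have ev : (π * Equiv.swap v w) v = π w := by simp
  have ew : (π * Equiv.swap v w) w = π v := by simp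
  have eo : ∀ j : Fin n, (j : ℕ) ≠ v → (j : ℕ) ≠ w → (π * Equiv.swap v w) j = π j := by
    intro j h1 h2
    simp [Equiv.swap_apply_of_ne_of_ne (fne h1) (fne h2)]
  have eu : (π * Equiv.swap v w) u = π u := eo u (by omega) (by omega)
  refine ⟨huv, hadj, ?_, ?_, ?_, ?_, ?_⟩
  · rw [eu, ew]; omega
  · rw [ew, ev]; omega
  · intro j hj
    rw [ew, eo j (by omega) (by omega)]
    exact hpre j hj
  · intro j hj1 hj2
    rw [ev, eo j (by omega) (by omega)]
    exact hmid j hj1 hj2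
  · intro j hj
    rw [eu, ev, eo j (by omega) (by omega)]
    exact hsuf j hj

lemma swap21 (h : P2 π u v w) : P1 (π * Equiv.swap v w) u v w := by
  obtain ⟨huv, hadj, hab, hbc, hpre, hmid, hsuf⟩ := h
  have ev : (π * Equiv.swap v w) v = π w := by simp
  have ew : (π * Equiv.swap v w) w = π v := by simp
  have eo : ∀ j : Fin n, (j : ℕ) ≠ v → (j : ℕ) ≠ w → (π * Equiv.swap v w) j = π j := by
    intro j h1 h2
    simp [Equiv.swap_apply_of_ne_of_ne (fne h1) (fne h2)]
  have eu : (π * Equiv.swap v w) u = π u := eo u (by omega) (by omega)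
  refine ⟨huv, hadj, ?_, ?_, ?_, ?_, ?_⟩
  · rw [eu, ev]; omega
  · rw [ev, ew]; omega
  · intro j hj
    rw [ev, eo j (by omega) (by omega)]
    exact hpre j hj
  · intro j hj1 hj2
    rw [ew, eo j (by omega) (by omega)]
    exact hmid j hj1 hj2
  · intro j hj
    rw [eu, ew, eo j (by omega) (by omega)]
    exact hsuf j hj

lemma L4 {u' v' w' : Fin n} (h : P1 π u v w)
    (h' : P1 (π * Equiv.swap v w) u' v' w') : (v' : ℕ) < v := by
  have hf := h; have hf' := h'
  obtain ⟨huv, hadj, hab, hbc, hpre, hmid, hsuf⟩ := h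
  obtain ⟨huv', hadj', hab', hbc', hpre', hmid', hsuf'⟩ := h'
  have ev : (π * Equiv.swap v w) v = π w := by simp
  have ew : (π * Equiv.swap v w) w = π v := by simp
  have eo : ∀ j : Fin n, (j : ℕ) ≠ v → (j : ℕ) ≠ w → (π * Equiv.swap v w) j = π j := by
    intro j h1 h2
    simp [Equiv.swap_apply_of_ne_of_ne (fne h1) (fne h2)]
  by_contra hge
  push_neg at hge
  by_cases hveq : (v' : ℕ) = (v : ℕ)
  · have hv' : v' = v := Fin.ext hveq
    have hw' : w' = w := Fin.ext (by omega)
    rw [hv', hw', ev, ew] at hbc'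
    omega
  · have hgt : (v : ℕ) < v' := by omega
    by_cases hu' : (u' : ℕ) ≤ (v : ℕ)
    · have c1 := max1 hf' v (by omega) (by omega)
      rw [ev] at c1
      have e1 : (π * Equiv.swap v w) w' = π w' := eo w' (by omega) (by omega)
      rw [e1] at c1
      have c2 := max1 hf w' (by omega) (by omega)
      omega
    · have p1 := hpre' u (by omega)
      have e1 : (π * Equiv.swap v w) u = π u := eo u (by omega) (by omega)
      rw [e1] at p1
      by_cases hvw : (v' : ℕ) = (w : ℕ)
      · rw [Fin.ext hvw, ew] at p1
        omega
      · have e2 : (π * Equiv.swap v w) v' = π v' := eo v' (by omega) (by omega)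
        rw [e2] at p1
        have s1 := (hsuf v' (by omega)).1
        omega

lemma L5 {u' v' w' : Fin n} (h : P2 π u v w)
    (h' : P2 (π * Equiv.swap v w) u' v' w') : (v : ℕ) < v' := by
  have hf := h; have hf' := h'
  obtain ⟨huv, hadj, hab, hbc, hpre, hmid, hsuf⟩ := h
  obtain ⟨huv', hadj', hab', hbc', hpre', hmid', hsuf'⟩ := h'
  have ev : (π * Equiv.swap v w) v = π w := by simp
  have ew : (π * Equiv.swap v w) w = π v := by simp
  have eo : ∀ j : Fin n, (j : ℕ) ≠ v → (j : ℕ) ≠ w → (π * Equiv.swap v w) j = π j := by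
    intro j h1 h2
    simp [Equiv.swap_apply_of_ne_of_ne (fne h1) (fne h2)]
  by_contra hge
  push_neg at hge
  by_cases hveq : (v' : ℕ) = (v : ℕ)
  · have hv' : v' = v := Fin.ext hveq
    have hw' : w' = w := Fin.ext (by omega)
    rw [hv', hw', ev, ew] at hbc'
    omega
  · have hgt : (v' : ℕ) < v := by omega
    by_cases hva : (u : ℕ) ≤ (v' : ℕ)
    · have c1 := max2 hf' w (by omega) (by omega)
      rw [ew] at c1
      have e1 : (π * Equiv.swap v w) v' = π v' := eo v' (by omega) (by omega)
      rw [e1] at c1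
      have c2 := max2 hf v' (by omega) (by omega)
      omega
    · by_cases hwu : (w' : ℕ) < (u : ℕ)
      · have s1 := (hsuf' u (by omega)).1
        have e1 : (π * Equiv.swap v w) u = π u := eo u (by omega) (by omega)
        have e2 : (π * Equiv.swap v w) u' = π u' := eo u' (by omega) (by omega)
        rw [e1, e2] at s1
        have p1 := hpre u' (by omega)
        omega
      · have hww : w' = u := Fin.ext (by omega)
        rw [hww] at hab'
        have e1 : (π * Equiv.swap v w) u = π u := eo u (by omega) (by omega)
        have e2 : (π * Equiv.swap v w) u' = π u' := eo u' (by omega) (by omega)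
        rw [e1, e2] at hab'
        have p1 := hpre u' (by omega)
        omega

end swaps

def hasQ1 (π : Equiv.Perm (Fin n)) : Prop :=
  ∃ t : Fin n × Fin n × Fin n, P1 π t.1 t.2.1 t.2.2
def hasQ2 (π : Equiv.Perm (Fin n)) : Prop :=
  ∃ t : Fin n × Fin n × Fin n, P2 π t.1 t.2.1 t.2.2

open scoped Classical in
noncomputable def fstep (π : Equiv.Perm (Fin n)) : Equiv.Perm (Fin n) :=
  if h : hasQ1 π then π * Equiv.swap h.choose.2.1 h.choose.2.2 else π

open scoped Classical in
noncomputable def gstep (π : Equiv.Perm (Fin n)) : Equiv.Perm (Fin n) :=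
  if h : hasQ2 π then π * Equiv.swap h.choose.2.1 h.choose.2.2 else π

open scoped Classical in
noncomputable def Fiter : ℕ → Equiv.Perm (Fin n) → Equiv.Perm (Fin n)
  | 0, π => π
  | f + 1, π => if hasQ1 π then Fiter f (fstep π) else π

open scoped Classical in
noncomputable def Giter : ℕ → Equiv.Perm (Fin n) → Equiv.Perm (Fin n)
  | 0, π => π
  | f + 1, π => if hasQ2 π then Giter f (gstep π) else π

variable {π : Equiv.Perm (Fin n)}

lemma fstep_eq {u v w : Fin n} (h : P1 π u v w) : fstep π = π * Equiv.swap v w := by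
  have hh : hasQ1 π := ⟨(u, v, w), h⟩
  rw [fstep, dif_pos hh]
  obtain ⟨e1, e2, e3⟩ := uniq1 hh.choose_spec h
  rw [e2, e3]

lemma gstep_eq {u v w : Fin n} (h : P2 π u v w) : gstep π = π * Equiv.swap v w := by
  have hh : hasQ2 π := ⟨(u, v, w), h⟩
  rw [gstep, dif_pos hh]
  obtain ⟨e1, e2, e3⟩ := uniq2 hh.choose_spec h
  rw [e2, e3]

lemma swap_cancel (π : Equiv.Perm (Fin n)) (v w : Fin n) :
    π * Equiv.swap v w * Equiv.swap v w = π := by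
  rw [mul_assoc, Equiv.swap_mul_self, mul_one]

lemma Fiter_succ_pos {f : ℕ} (h : hasQ1 π) : Fiter (f + 1) π = Fiter f (fstep π) := by
  rw [Fiter, if_pos h]

lemma Fiter_succ_neg {f : ℕ} (h : ¬ hasQ1 π) : Fiter (f + 1) π = π := by
  rw [Fiter, if_neg h]

lemma Giter_succ_pos {f : ℕ} (h : hasQ2 π) : Giter (f + 1) π = Giter f (gstep π) := by
  rw [Giter, if_pos h]

lemma Giter_succ_neg {f : ℕ} (h : ¬ hasQ2 π) : Giter (f + 1) π = π := by
  rw [Giter, if_neg h]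

lemma Fiter_of_not (h : ¬ hasQ1 π) : ∀ f, Fiter f π = π
  | 0 => rfl
  | f + 1 => Fiter_succ_neg h

lemma Giter_of_not (h : ¬ hasQ2 π) : ∀ f, Giter f π = π
  | 0 => rfl
  | f + 1 => Giter_succ_neg h

lemma P1_v_lt {u v w : Fin n} (h : P1 π u v w) : (v : ℕ) + 1 < n := by
  have := h.2.1; have := w.isLt; omega

lemma P2_v_lt {u v w : Fin n} (h : P2 π u v w) : (v : ℕ) + 1 < n := by
  have := h.2.1; have := w.isLt; omega

/-- after enough steps no q1 occurrence remains, and if we started with one, a q2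
occurrence has been created. -/
lemma A1 : ∀ f : ℕ, ∀ π : Equiv.Perm (Fin n),
    (∀ t : Fin n × Fin n × Fin n, P1 π t.1 t.2.1 t.2.2 → (t.2.1 : ℕ) < f) →
    ¬ hasQ1 (Fiter f π) ∧ (hasQ1 π → hasQ2 (Fiter f π)) := by
  intro f
  induction f with
  | zero =>
    intro π hg
    have hnot : ¬ hasQ1 π := by
      rintro ⟨t, ht⟩
      exact absurd (hg t ht) (by omega)
    exact ⟨hnot, fun hc => absurd hc hnot⟩
  | succ f ih =>
    intro π hg
    by_cases h : hasQ1 π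
    · obtain ⟨⟨u, v, w⟩, hocc⟩ := id h
      have hst : fstep π = π * Equiv.swap v w := fstep_eq hocc
      have hg' : ∀ t : Fin n × Fin n × Fin n, P1 (fstep π) t.1 t.2.1 t.2.2 → (t.2.1 : ℕ) < f := by
        intro t ht
        rw [hst] at ht
        have h4 := L4 hocc ht
        have := hg (u, v, w) hocc
        omega
      have hih := ih (fstep π) hg'
      rw [Fiter_succ_pos h]
      refine ⟨hih.1, fun _ => ?_⟩
      by_cases h2 : hasQ1 (fstep π)
      · exact hih.2 h2
      · rw [Fiter_of_not h2]
        exact ⟨(u, v, w), hst ▸ swap12 hocc⟩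
    · rw [Fiter_succ_neg h]
      exact ⟨h, fun hc => absurd hc h⟩

lemma B1 : ∀ f : ℕ, ∀ π : Equiv.Perm (Fin n),
    (∀ t : Fin n × Fin n × Fin n, P2 π t.1 t.2.1 t.2.2 → n - (t.2.1 : ℕ) ≤ f) →
    ¬ hasQ2 (Giter f π) ∧ (hasQ2 π → hasQ1 (Giter f π)) := by
  intro f
  induction f with
  | zero =>
    intro π hg
    have hnot : ¬ hasQ2 π := by
      rintro ⟨t, ht⟩
      have := hg t ht
      have := P2_v_lt ht
      omega
    exact ⟨hnot, fun hc => absurd hc hnot⟩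
  | succ f ih =>
    intro π hg
    by_cases h : hasQ2 π
    · obtain ⟨⟨u, v, w⟩, hocc⟩ := id h
      have hst : gstep π = π * Equiv.swap v w := gstep_eq hocc
      have hg' : ∀ t : Fin n × Fin n × Fin n, P2 (gstep π) t.1 t.2.1 t.2.2 → n - (t.2.1 : ℕ) ≤ f := by
        intro t ht
        rw [hst] at ht
        have h5 := L5 hocc ht
        have := hg (u, v, w) hocc
        omega
      have hih := ih (gstep π) hg'
      rw [Giter_succ_pos h]
      refine ⟨hih.1, fun _ => ?_⟩
      by_cases h2 : hasQ2 (gstep π)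
      · exact hih.2 h2
      · rw [Giter_of_not h2]
        exact ⟨(u, v, w), hst ▸ swap21 hocc⟩
    · rw [Giter_succ_neg h]
      exact ⟨h, fun hc => absurd hc h⟩

lemma A2 : ∀ g : ℕ, ∀ π : Equiv.Perm (Fin n),
    (∀ t : Fin n × Fin n × Fin n, P1 π t.1 t.2.1 t.2.2 → (t.2.1 : ℕ) < g) →
    Fiter (g + 1) π = Fiter g π := by
  intro g
  induction g with
  | zero =>
    intro π hg
    have hnot : ¬ hasQ1 π := by
      rintro ⟨t, ht⟩
      exact absurd (hg t ht) (by omega)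
    rw [Fiter_succ_neg hnot]
    rfl
  | succ g ih =>
    intro π hg
    by_cases h : hasQ1 π
    · obtain ⟨⟨u, v, w⟩, hocc⟩ := id h
      have hst : fstep π = π * Equiv.swap v w := fstep_eq hocc
      have hg' : ∀ t : Fin n × Fin n × Fin n, P1 (fstep π) t.1 t.2.1 t.2.2 → (t.2.1 : ℕ) < g := by
        intro t ht
        rw [hst] at ht
        have h4 := L4 hocc ht
        have := hg (u, v, w) hocc
        omega
      rw [Fiter_succ_pos h, Fiter_succ_pos h, ih (fstep π) hg']
    · rw [Fiter_succ_neg h, Fiter_succ_neg h]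

lemma B2 : ∀ g : ℕ, ∀ π : Equiv.Perm (Fin n),
    (∀ t : Fin n × Fin n × Fin n, P2 π t.1 t.2.1 t.2.2 → n - (t.2.1 : ℕ) ≤ g) →
    Giter (g + 1) π = Giter g π := by
  intro g
  induction g with
  | zero =>
    intro π hg
    have hnot : ¬ hasQ2 π := by
      rintro ⟨t, ht⟩
      have := hg t ht
      have := P2_v_lt ht
      omega
    rw [Giter_succ_neg hnot]
    rfl
  | succ g ih =>
    intro π hg
    by_cases h : hasQ2 π
    · obtain ⟨⟨u, v, w⟩, hocc⟩ := id h
      have hst : gstep π = π * Equiv.swap v w := gstep_eq hocc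
      have hg' : ∀ t : Fin n × Fin n × Fin n, P2 (gstep π) t.1 t.2.1 t.2.2 → n - (t.2.1 : ℕ) ≤ g := by
        intro t ht
        rw [hst] at ht
        have h5 := L5 hocc ht
        have := hg (u, v, w) hocc
        omega
      rw [Giter_succ_pos h, Giter_succ_pos h, ih (gstep π) hg']
    · rw [Giter_succ_neg h, Giter_succ_neg h]

lemma A3 : ∀ d : ℕ, ∀ π : Equiv.Perm (Fin n), Fiter (n + d) π = Fiter n π := by
  intro d
  induction d with
  | zero => intro π; rfl
  | succ d ih =>
    intro π
    have : Fiter (n + d + 1) π = Fiter (n + d) π := by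
      apply A2
      intro t ht
      have := P1_v_lt ht
      omega
    rw [show n + (d + 1) = n + d + 1 from rfl, this, ih]

lemma B3 : ∀ d : ℕ, ∀ π : Equiv.Perm (Fin n), Giter (n + d) π = Giter n π := by
  intro d
  induction d with
  | zero => intro π; rfl
  | succ d ih =>
    intro π
    have : Giter (n + d + 1) π = Giter (n + d) π := by
      apply B2
      intro t ht
      omega
    rw [show n + (d + 1) = n + d + 1 from rfl, this, ih]


lemma T : ∀ f : ℕ, ∀ π : Equiv.Perm (Fin n), ∀ t : Fin n × Fin n × Fin n,
    P1 π t.1 t.2.1 t.2.2 → (t.2.1 : ℕ) < f →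
    Giter (n + f) (Fiter f π) = Giter n π := by
  intro f
  induction f with
  | zero => intro π t h hv; omega
  | succ f ih =>
    rintro π ⟨u, v, w⟩ h hv
    simp only at h hv
    have hq : hasQ1 π := ⟨(u, v, w), h⟩
    have hst : fstep π = π * Equiv.swap v w := fstep_eq h
    have hp2 : P2 (fstep π) u v w := hst ▸ swap12 h
    have hq2 : hasQ2 (fstep π) := ⟨(u, v, w), hp2⟩
    have hgs : gstep (fstep π) = π := by
      rw [gstep_eq hp2, hst, swap_cancel]
    have hn1 : 1 ≤ n := by have := w.isLt; omega
    rw [Fiter_succ_pos hq]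
    by_cases h2 : hasQ1 (fstep π)
    · obtain ⟨t2, h2o⟩ := id h2
      have hv2 : (t2.2.1 : ℕ) < v := L4 h (hst ▸ h2o)
      have hih := ih (fstep π) t2 h2o (by omega)
      have e1 := B2 (n + f) (Fiter f (fstep π)) (by intro t ht; omega)
      have e1b : Giter (n + (f + 1)) (Fiter f (fstep π)) =
          Giter ((n + f) + 1) (Fiter f (fstep π)) := rfl
      rw [e1b, e1, hih]
      have e2a : Giter n (fstep π) = Giter ((n - 1) + 1) (fstep π) :=
        congrArg (fun k => Giter k (fstep π)) (by omega)
      rw [e2a, Giter_succ_pos hq2, hgs]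
      have e3 := B2 (n - 1) π (by intro t ht; have h1 := ht.1; omega)
      have e3b : Giter n π = Giter ((n - 1) + 1) π :=
        congrArg (fun k => Giter k π) (by omega)
      rw [e3b, e3]
    · rw [Fiter_of_not h2]
      have e1 : Giter (n + (f + 1)) (fstep π) = Giter (n + f) (gstep (fstep π)) :=
        Giter_succ_pos hq2
      rw [e1, hgs, B3 f π]

lemma T' : ∀ f : ℕ, ∀ π : Equiv.Perm (Fin n), ∀ t : Fin n × Fin n × Fin n,
    P2 π t.1 t.2.1 t.2.2 → n - (t.2.1 : ℕ) ≤ f →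
    Fiter (n + f) (Giter f π) = Fiter n π := by
  intro f
  induction f with
  | zero =>
    intro π t h hv
    have := P2_v_lt h
    omega
  | succ f ih =>
    rintro π ⟨u, v, w⟩ h hv
    simp only at h hv
    have hq : hasQ2 π := ⟨(u, v, w), h⟩
    have hst : gstep π = π * Equiv.swap v w := gstep_eq h
    have hp1 : P1 (gstep π) u v w := hst ▸ swap21 h
    have hq1 : hasQ1 (gstep π) := ⟨(u, v, w), hp1⟩
    have hfs : fstep (gstep π) = π := by
      rw [fstep_eq hp1, hst, swap_cancel]
    have hn1 : 1 ≤ n := by have := w.isLt; omega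
    rw [Giter_succ_pos hq]
    by_cases h2 : hasQ2 (gstep π)
    · obtain ⟨t2, h2o⟩ := id h2
      have hv2 : (v : ℕ) < t2.2.1 := L5 h (hst ▸ h2o)
      have hih := ih (gstep π) t2 h2o (by omega)
      have e1 := A2 (n + f) (Giter f (gstep π)) (by
        intro t ht
        have := P1_v_lt ht
        omega)
      have e1b : Fiter (n + (f + 1)) (Giter f (gstep π)) =
          Fiter ((n + f) + 1) (Giter f (gstep π)) := rfl
      rw [e1b, e1, hih]
      have e2a : Fiter n (gstep π) = Fiter ((n - 1) + 1) (gstep π) :=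
        congrArg (fun k => Fiter k (gstep π)) (by omega)
      rw [e2a, Fiter_succ_pos hq1, hfs]
      have e3 := A2 (n - 1) π (by
        intro t ht
        have := P1_v_lt ht
        omega)
      have e3b : Fiter n π = Fiter ((n - 1) + 1) π :=
        congrArg (fun k => Fiter k π) (by omega)
      rw [e3b, e3]
    · rw [Giter_of_not h2]
      have e1 : Fiter (n + (f + 1)) (gstep π) = Fiter (n + f) (fstep (gstep π)) :=
        Fiter_succ_pos hq1
      rw [e1, hfs, A3 f π]

lemma mainA (h1 : hasQ1 π) (h2 : ¬ hasQ2 π) :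
    ¬ hasQ1 (Fiter n π) ∧ hasQ2 (Fiter n π) ∧ Giter n (Fiter n π) = π := by
  have hg : ∀ t : Fin n × Fin n × Fin n, P1 π t.1 t.2.1 t.2.2 → (t.2.1 : ℕ) < n := by
    intro t ht
    have := P1_v_lt ht
    omega
  have ha := A1 n π hg
  refine ⟨ha.1, ha.2 h1, ?_⟩
  obtain ⟨t, ht⟩ := h1
  have hT := T n π t ht (by have := P1_v_lt ht; omega)
  rw [Giter_of_not h2] at hT
  rw [← B3 n (Fiter n π)]
  exact hT

lemma mainB (h1 : hasQ2 π) (h2 : ¬ hasQ1 π) :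
    ¬ hasQ2 (Giter n π) ∧ hasQ1 (Giter n π) ∧ Fiter n (Giter n π) = π := by
  have hg : ∀ t : Fin n × Fin n × Fin n, P2 π t.1 t.2.1 t.2.2 → n - (t.2.1 : ℕ) ≤ n := by
    intro t ht
    omega
  have hb := B1 n π hg
  refine ⟨hb.1, hb.2 h1, ?_⟩
  obtain ⟨t, ht⟩ := h1
  have hT := T' n π t ht (by omega)
  rw [Fiter_of_not h2] at hT
  rw [← A3 n (Giter n π)]
  exact hT

open scoped Classical in
noncomputable def Phi (π : Equiv.Perm (Fin n)) : Equiv.Perm (Fin n) :=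
  if hasQ1 π ∧ ¬ hasQ2 π then Fiter n π
  else if hasQ2 π ∧ ¬ hasQ1 π then Giter n π
  else π

lemma Phi_spec (π : Equiv.Perm (Fin n)) :
    (hasQ1 (Phi π) ↔ hasQ2 π) ∧ (hasQ2 (Phi π) ↔ hasQ1 π) ∧ Phi (Phi π) = π := by
  by_cases hA : hasQ1 π ∧ ¬ hasQ2 π
  · have e : Phi π = Fiter n π := by rw [Phi, if_pos hA]
    obtain ⟨m1, m2, m3⟩ := mainA hA.1 hA.2
    rw [e]
    refine ⟨⟨fun hc => absurd hc m1, fun hc => absurd hc hA.2⟩,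
      ⟨fun _ => hA.1, fun _ => m2⟩, ?_⟩
    have e2 : Phi (Fiter n π) = Giter n (Fiter n π) := by
      rw [Phi, if_neg (by tauto), if_pos ⟨m2, m1⟩]
    rw [e2, m3]
  · by_cases hB : hasQ2 π ∧ ¬ hasQ1 π
    · have e : Phi π = Giter n π := by rw [Phi, if_neg hA, if_pos hB]
      obtain ⟨m1, m2, m3⟩ := mainB hB.1 hB.2
      rw [e]
      refine ⟨⟨fun _ => hB.1, fun _ => m2⟩,
        ⟨fun hc => absurd hc m1, fun hc => absurd hc hB.2⟩, ?_⟩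
      have e2 : Phi (Giter n π) = Fiter n (Giter n π) := by
        rw [Phi, if_pos ⟨m2, m1⟩]
      rw [e2, m3]
    · have e : Phi π = π := by rw [Phi, if_neg hA, if_neg hB]
      rw [e]
      refine ⟨?_, ?_, e⟩ <;> constructor <;> intro hc <;> tauto

def occTriples1 (π : Equiv.Perm (Fin n)) := {t : Fin n × Fin n × Fin n // P1 π t.1 t.2.1 t.2.2}
def occTriples2 (π : Equiv.Perm (Fin n)) := {t : Fin n × Fin n × Fin n // P2 π t.1 t.2.1 t.2.2}

lemma fin3all : ∀ a : Fin 3, a = 0 ∨ a = 1 ∨ a = 2 := by decide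

noncomputable def occEquiv1 (π : Equiv.Perm (Fin n)) :
    {i : Fin 3 → Fin n // IsMeshOcc perm123 Sset π i} ≃ occTriples1 π where
  toFun := fun x => ⟨(x.1 0, x.1 1, x.1 2), (isMeshOcc1_iff π x.1).mp x.2⟩
  invFun := fun x => ⟨![x.1.1, x.1.2.1, x.1.2.2], (isMeshOcc1_iff π _).mpr (by
    simpa using x.2)⟩
  left_inv := fun x => Subtype.ext (funext fun a => by
    rcases fin3all a with rfl | rfl | rfl <;> simp)
  right_inv := fun x => Subtype.ext (by simp)

noncomputable def occEquiv2 (π : Equiv.Perm (Fin n)) :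
    {i : Fin 3 → Fin n // IsMeshOcc perm132 Sset π i} ≃ occTriples2 π where
  toFun := fun x => ⟨(x.1 0, x.1 1, x.1 2), (isMeshOcc2_iff π x.1).mp x.2⟩
  invFun := fun x => ⟨![x.1.1, x.1.2.1, x.1.2.2], (isMeshOcc2_iff π _).mpr (by
    simpa using x.2)⟩
  left_inv := fun x => Subtype.ext (funext fun a => by
    rcases fin3all a with rfl | rfl | rfl <;> simp)
  right_inv := fun x => Subtype.ext (by simp)

open scoped Classical in
lemma occ1_def (π : Equiv.Perm (Fin n)) :
    occ perm123 Sset π = if hasQ1 π then 1 else 0 := by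
  rw [occ, Nat.card_congr (occEquiv1 π)]
  by_cases h : hasQ1 π
  · rw [if_pos h, Nat.card_eq_one_iff_unique]
    constructor
    · constructor
      rintro ⟨⟨u, v, w⟩, ht⟩ ⟨⟨u', v', w'⟩, ht'⟩
      obtain ⟨e1, e2, e3⟩ := uniq1 ht ht'
      simp only at e1 e2 e3
      apply Subtype.ext
      simp only [e1, e2, e3]
    · obtain ⟨t, ht⟩ := h
      exact ⟨⟨t, ht⟩⟩
  · rw [if_neg h]
    have : IsEmpty (occTriples1 π) := ⟨fun x => h ⟨x.1, x.2⟩⟩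
    exact Nat.card_of_isEmpty

open scoped Classical in
lemma occ2_def (π : Equiv.Perm (Fin n)) :
    occ perm132 Sset π = if hasQ2 π then 1 else 0 := by
  rw [occ, Nat.card_congr (occEquiv2 π)]
  by_cases h : hasQ2 π
  · rw [if_pos h, Nat.card_eq_one_iff_unique]
    constructor
    · constructor
      rintro ⟨⟨u, v, w⟩, ht⟩ ⟨⟨u', v', w'⟩, ht'⟩
      obtain ⟨e1, e2, e3⟩ := uniq2 ht ht'
      simp only at e1 e2 e3
      apply Subtype.ext
      simp only [e1, e2, e3]
    · obtain ⟨t, ht⟩ := h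
      exact ⟨⟨t, ht⟩⟩
  · rw [if_neg h]
    have : IsEmpty (occTriples2 π) := ⟨fun x => h ⟨x.1, x.2⟩⟩
    exact Nat.card_of_isEmpty

lemma occ1_Phi (π : Equiv.Perm (Fin n)) :
    occ perm123 Sset (Phi π) = occ perm132 Sset π := by
  rw [occ1_def, occ2_def]
  have := (Phi_spec π).1
  by_cases h : hasQ2 π
  · rw [if_pos h, if_pos (this.mpr h)]
  · rw [if_neg h, if_neg (fun hc => h (this.mp hc))]

lemma occ2_Phi (π : Equiv.Perm (Fin n)) :
    occ perm132 Sset (Phi π) = occ perm123 Sset π := by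
  rw [occ2_def, occ1_def]
  have := (Phi_spec π).2.1
  by_cases h : hasQ1 π
  · rw [if_pos h, if_pos (this.mpr h)]
  · rw [if_neg h, if_neg (fun hc => h (this.mp hc))]

end MeshAux

theorem statement_16' :
    ∀ n k ℓ : ℕ,
      Nat.card {π : Equiv.Perm (Fin n) // occ perm123 MeshAux.Sset π = k ∧ occ perm132 MeshAux.Sset π = ℓ} =
      Nat.card {π : Equiv.Perm (Fin n) // occ perm123 MeshAux.Sset π = ℓ ∧ occ perm132 MeshAux.Sset π = k} := by
  intro n k ℓ
  apply Nat.card_congr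
  refine ⟨fun x => ⟨MeshAux.Phi x.1, ?_⟩, fun x => ⟨MeshAux.Phi x.1, ?_⟩, ?_, ?_⟩
  · obtain ⟨h1, h2⟩ := x.2
    rw [MeshAux.occ1_Phi, MeshAux.occ2_Phi]
    exact ⟨h2, h1⟩
  · obtain ⟨h1, h2⟩ := x.2
    rw [MeshAux.occ1_Phi, MeshAux.occ2_Phi]
    exact ⟨h2, h1⟩
  · intro x
    exact Subtype.ext (MeshAux.Phi_spec x.1).2.2
  · intro x
    exact Subtype.ext (MeshAux.Phi_spec x.1).2.2

theorem statement_16 :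
    JointlyEquidistributed perm123 ({(0, 0), (0, 1), (1, 3), (2, 0), (2, 1), (2, 2), (2, 3), (3, 0), (3, 3)} : Set (ℕ × ℕ))
      perm132 ({(0, 0), (0, 1), (1, 3), (2, 0), (2, 1), (2, 2), (2, 3), (3, 0), (3, 3)} : Set (ℕ × ℕ)) := by
  exact statement_16'
end

section
/- Let S = {(0,0),(0,1),(2,0),(2,1),(2,2),(3,0),(3,1),(3,2)}, q1 = (123, S), q2 = (132, S). Then for every n ≥ 2 and all k, ℓ ≥ 0, the number of π ∈ S_n with occ(q1,π)=k and occ(q2,π)=ℓ equals 2·(n−1)! if k = ℓ = 0, and equals binom(k+ℓ, k) · Σ_{i=2}^{n−1} binom(n−1, i) · (n−1−i)! · c(i−1, k+ℓ) if (k,ℓ) ≠ (0,0), where binom denotes the binomial coefficient and c the unsigned Stirling numbers of the first kind; in particular, q1 and q2 are jointly equidistributed. -/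
/-!
An occurrence of either pattern is determined by its middle entry `p`: its last entry is the
smallest entry to the right of `p`, and its first entry is the leftmost entry below the two
smaller values. Hence `occ(q1, π)` counts the right-to-left minima `p` of `π` other than the last
entry that lie to the right of the minimum of `π`, and `occ(q2, π)` counts the positions to the
right of the minimum with exactly one smaller entry to their right; both are read off the Lehmer
code. Removing the first entry `v` of `π` (its Lehmer code is `v`) leaves the Lehmer codes of
the other positions unchanged, which gives the recursions
`countAfterMin (n+1) = countAll n + n * countAfterMin n`, where `countAll` drops the restriction
to the right of the minimum, and `countAll (m+2) k ℓ = countAll (m+1) (k-1) ℓ +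
countAll (m+1) k (ℓ-1) + m * countAll (m+1) k ℓ`. The latter is solved by
`binom(k+ℓ, k) c(m, k+ℓ)`, and both recursions are symmetric in `k` and `ℓ`.
-/

open Finset Equiv
open scoped Nat

variable {n : ℕ}

namespace Equiv.Perm

def lehmer (π : Perm (Fin n)) (p : Fin n) : ℕ := #{j | p < j ∧ π j < π p}

lemma lehmer_eq_zero_iff {π : Perm (Fin n)} {p : Fin n} :
    π.lehmer p = 0 ↔ ∀ k, p < k → π p < π k := by
  simp only [lehmer, card_eq_zero, filter_eq_empty_iff, mem_univ, true_implies, not_and,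
    not_lt]
  refine forall_congr' fun k => imp_congr_right fun hk => ?_
  exact ⟨fun h => h.lt_of_ne (π.injective.ne hk.ne), le_of_lt⟩

lemma lehmer_eq_one_iff {π : Perm (Fin n)} {p : Fin n} :
    π.lehmer p = 1 ↔ ∃ q, p < q ∧ π q < π p ∧ ∀ k, p < k → k ≠ q → π p < π k := by
  simp only [lehmer, card_eq_one, eq_singleton_iff_unique_mem, mem_filter, mem_univ, true_and]
  refine exists_congr fun q => (and_assoc).trans <| and_congr_right fun _ =>
    and_congr_right fun _ => ?_
  refine forall_congr' fun k => ⟨fun h hk hkq => ?_, fun h ⟨hk, hlt⟩ => ?_⟩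
  · exact (not_lt.1 fun hlt => hkq (h ⟨hk, hlt⟩)).lt_of_ne (π.injective.ne hk.ne)
  · by_contra hkq
    exact (h hk hkq).not_gt hlt

lemma lehmer_zero (π : Perm (Fin (n + 1))) : π.lehmer 0 = π 0 := by
  rw [lehmer, ← Fin.card_Iio (π 0)]
  refine card_bij (fun j _ => π j) (fun j hj => ?_) (fun _ _ _ _ h => π.injective h)
    (fun y hy => ⟨π.symm y, ?_, by simp⟩)
  · simpa using (mem_filter.1 hj).2.2
  · have hy : y < π 0 := by simpa using hy
    refine mem_filter.2 ⟨mem_univ _, (Fin.pos_iff_ne_zero' _).2 fun h => ?_, by simpa using hy⟩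
    simp [← h] at hy

noncomputable def cons (v : Fin (n + 1)) (σ : Perm (Fin n)) : Perm (Fin (n + 1)) :=
  ofBijective (Fin.cons v (v.succAbove ∘ σ) : Fin (n + 1) → Fin (n + 1)) <|
    Finite.injective_iff_bijective.1 <| Fin.cons_injective_iff.2
      ⟨fun ⟨j, hj⟩ => Fin.succAbove_ne v (σ j) hj, Fin.succAbove_right_injective.comp σ.injective⟩

@[simp] lemma cons_zero (v : Fin (n + 1)) (σ : Perm (Fin n)) : cons v σ 0 = v := rfl

@[simp] lemma cons_succ (v : Fin (n + 1)) (σ : Perm (Fin n)) (j : Fin n) :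
    cons v σ j.succ = v.succAbove (σ j) := rfl

lemma cons_injective : Function.Injective fun x : Fin (n + 1) × Perm (Fin n) => cons x.1 x.2 := by
  rintro ⟨v, σ⟩ ⟨w, τ⟩ h
  have hv : v = w := by simpa using congrArg (· 0) h
  subst hv
  have hσ : σ = τ := Equiv.ext fun j => by simpa using congrArg (· j.succ) h
  rw [hσ]

noncomputable def consEquiv : Fin (n + 1) × Perm (Fin n) ≃ Perm (Fin (n + 1)) :=
  ofBijective _ <| (Fintype.bijective_iff_injective_and_card _).2
    ⟨cons_injective, by simp [Fintype.card_perm, Nat.factorial_succ]⟩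

lemma card_filter_eq_sum_cons (P : Perm (Fin (n + 1)) → Prop) [DecidablePred P] :
    #{π | P π} = ∑ v, #{σ : Perm (Fin n) | P (cons v σ)} := by
  simp only [card_filter]
  rw [← consEquiv.sum_comp, Fintype.sum_prod_type]
  rfl

lemma lehmer_cons_zero (v : Fin (n + 1)) (σ : Perm (Fin n)) : (cons v σ).lehmer 0 = v := by
  rw [lehmer_zero, cons_zero]

lemma lehmer_cons_succ (v : Fin (n + 1)) (σ : Perm (Fin n)) (p : Fin n) :
    (cons v σ).lehmer p.succ = σ.lehmer p := by
  rw [lehmer, Fin.card_filter_univ_succ]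
  simp [lehmer, Fin.succAbove_lt_succAbove_iff]

variable (Q : ℕ → ℕ → Prop) [DecidableRel Q]

/-- `Q` sees the number `n - p` of positions from `p` to the end and the Lehmer code at `p`. -/
def codeCount (π : Perm (Fin n)) : ℕ := #{p : Fin n | Q (n - p) (π.lehmer p)}

/-- The minimum of `π` sits at the first position with Lehmer code `0`, so this counts the
positions to the right of the minimum. -/
def codeCountAfterMin (π : Perm (Fin n)) : ℕ :=
  #{p : Fin n | Q (n - p) (π.lehmer p) ∧ ∃ j < p, π.lehmer j = 0}

lemma codeCount_cons (v : Fin (n + 1)) (σ : Perm (Fin n)) :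
    codeCount Q (cons v σ) = codeCount Q σ + if Q (n + 1) v then 1 else 0 := by
  rw [codeCount, Fin.card_filter_univ_succ]
  simp only [Fin.val_zero, Nat.sub_zero, lehmer_cons_zero, Fin.val_succ, Nat.add_sub_add_right,
    lehmer_cons_succ]
  split_ifs <;> rfl

lemma codeCountAfterMin_cons (v : Fin (n + 1)) (σ : Perm (Fin n)) :
    codeCountAfterMin Q (cons v σ) = if v = 0 then codeCount Q σ else codeCountAfterMin Q σ := by
  have hmin (p : Fin n) : (∃ j < p.succ, (cons v σ).lehmer j = 0) ↔
      v = 0 ∨ ∃ j < p, σ.lehmer j = 0 := by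
    simp only [Fin.exists_fin_succ, Fin.succ_pos, true_and, lehmer_cons_zero, Fin.val_eq_zero_iff,
      Fin.succ_lt_succ_iff, lehmer_cons_succ]
  rw [codeCountAfterMin, Fin.card_filter_univ_succ, if_neg (by simp)]
  simp only [Fin.val_succ, Nat.add_sub_add_right, lehmer_cons_succ, hmin]
  split_ifs with hv <;> simp [codeCount, codeCountAfterMin, hv]

end Equiv.Perm

open Perm

abbrev ZeroCodeNotLast (r c : ℕ) : Prop := 2 ≤ r ∧ c = 0

abbrev OneCode (_ c : ℕ) : Prop := c = 1

def countAfterMin (n k ℓ : ℕ) : ℕ :=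
  #{π : Perm (Fin n) | codeCountAfterMin ZeroCodeNotLast π = k ∧ codeCountAfterMin OneCode π = ℓ}

def countAll (n k ℓ : ℕ) : ℕ :=
  #{π : Perm (Fin n) | codeCount ZeroCodeNotLast π = k ∧ codeCount OneCode π = ℓ}

lemma countAfterMin_zero (k ℓ : ℕ) : countAfterMin 0 k ℓ = if k = 0 ∧ ℓ = 0 then 1 else 0 := by
  by_cases h : k = 0 ∧ ℓ = 0 <;> simp [countAfterMin, codeCountAfterMin, eq_comm, h]

lemma countAll_zero (k ℓ : ℕ) : countAll 0 k ℓ = if k = 0 ∧ ℓ = 0 then 1 else 0 := by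
  by_cases h : k = 0 ∧ ℓ = 0 <;> simp [countAll, codeCount, eq_comm, h]

lemma countAfterMin_succ (n k ℓ : ℕ) :
    countAfterMin (n + 1) k ℓ = countAll n k ℓ + n * countAfterMin n k ℓ := by
  rw [countAfterMin, card_filter_eq_sum_cons, Fin.sum_univ_succ]
  simp only [codeCountAfterMin_cons, Fin.succ_ne_zero, if_true, if_false, sum_const, card_univ,
    Fintype.card_fin, smul_eq_mul]
  rfl

lemma countAll_one (k ℓ : ℕ) : countAll 1 k ℓ = countAll 0 k ℓ := by
  rw [countAll, card_filter_eq_sum_cons, Fin.sum_univ_one]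
  simp [codeCount_cons, countAll, ZeroCodeNotLast]

lemma countAll_add_two (m k ℓ : ℕ) :
    countAll (m + 2) k ℓ = (if k = 0 then 0 else countAll (m + 1) (k - 1) ℓ) +
      (if ℓ = 0 then 0 else countAll (m + 1) k (ℓ - 1)) + m * countAll (m + 1) k ℓ := by
  rw [countAll, card_filter_eq_sum_cons, Fin.sum_univ_succ, Fin.sum_univ_succ]
  simp only [codeCount_cons, ZeroCodeNotLast, OneCode, Fin.val_zero, Fin.val_succ]
  rcases k with _ | k <;> rcases ℓ with _ | ℓ <;> simp [countAll, add_assoc]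

lemma stirlingFirst_succ_succ (m k : ℕ) :
    stirlingFirst (m + 1) (k + 1) = m * stirlingFirst m (k + 1) + stirlingFirst m k := rfl

lemma countAll_succ (m k ℓ : ℕ) :
    countAll (m + 1) k ℓ = (k + ℓ).choose k * stirlingFirst m (k + ℓ) := by
  induction m generalizing k ℓ with
  | zero =>
    rw [countAll_one, countAll_zero]
    rcases k with _ | k <;> rcases ℓ with _ | ℓ <;> simp [stirlingFirst]
  | succ m ih =>
    rw [countAll_add_two]
    simp only [ih]
    rcases k with _ | k <;> rcases ℓ with _ | ℓ
    · cases m <;> simp [stirlingFirst]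
    · simp [stirlingFirst_succ_succ]; ring
    · simp [stirlingFirst_succ_succ]; ring
    · rw [show k + 1 + (ℓ + 1) = k + ℓ + 1 + 1 by ring, stirlingFirst_succ_succ,
        Nat.choose_succ_succ']
      simp only [Nat.add_eq_zero_iff, one_ne_zero, and_false, if_false, Nat.add_sub_cancel]
      ring_nf

lemma countAll_comm (n k ℓ : ℕ) : countAll n k ℓ = countAll n ℓ k := by
  cases n with
  | zero => simp only [countAll_zero, and_comm]
  | succ m => rw [countAll_succ, countAll_succ, Nat.choose_symm_add, add_comm]

lemma countAfterMin_comm (n k ℓ : ℕ) : countAfterMin n k ℓ = countAfterMin n ℓ k := by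
  induction n with
  | zero => simp only [countAfterMin_zero, and_comm]
  | succ n ih => rw [countAfterMin_succ, countAfterMin_succ, countAll_comm, ih]

lemma countAfterMin_add_two_zero_zero (m : ℕ) : countAfterMin (m + 2) 0 0 = 2 * (m + 1)! := by
  induction m with
  | zero => simp [countAfterMin_succ, countAll_one, countAll_zero]
  | succ m ih =>
    rw [countAfterMin_succ, ih, countAll_succ, Nat.factorial_succ (m + 1)]
    simp [stirlingFirst]
    ring

lemma choose_mul_factorial_succ {n i : ℕ} (h : i ≤ n) :
    (n + 1).choose i * (n + 1 - i)! = (n + 1) * (n.choose i * (n - i)!) := by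
  rw [show n + 1 - i = n - i + 1 by omega, Nat.factorial_succ, ← mul_assoc,
    show n - i + 1 = n + 1 - i by omega, ← Nat.choose_mul_succ_eq]
  ring

lemma countAfterMin_add_two (m k ℓ : ℕ) (h : ¬(k = 0 ∧ ℓ = 0)) :
    countAfterMin (m + 2) k ℓ = (k + ℓ).choose k *
      ∑ i ∈ Icc 2 (m + 1), (m + 1).choose i * (m + 1 - i)! * stirlingFirst (i - 1) (k + ℓ) := by
  induction m with
  | zero => simp [countAfterMin_succ, countAll_one, countAll_zero, h]
  | succ m ih =>
    rw [countAfterMin_succ, ih, countAll_succ, sum_Icc_succ_top (by omega : 2 ≤ m + 2), mul_add]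
    have hsum : ∑ i ∈ Icc 2 (m + 1), (m + 2).choose i * (m + 2 - i)! * stirlingFirst (i - 1) (k + ℓ)
        = (m + 2) * ∑ i ∈ Icc 2 (m + 1),
          (m + 1).choose i * (m + 1 - i)! * stirlingFirst (i - 1) (k + ℓ) := by
      rw [mul_sum]
      refine sum_congr rfl fun i hi => ?_
      rw [choose_mul_factorial_succ (mem_Icc.1 hi).2]
      ring
    simp only [hsum, Nat.choose_self, Nat.sub_self, Nat.factorial_zero, Nat.add_sub_cancel]
    ring

section Mesh

variable {m : ℕ}

def boundaryExt (g : Fin m → Fin n) (b : ℕ) : ℕ :=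
  if h : 1 ≤ b ∧ b ≤ m then (g ⟨b - 1, by omega⟩ : ℕ) + 1 else if b = 0 then 0 else n + 1

lemma posExt_eq_boundaryExt (i : Fin m → Fin n) : posExt i = boundaryExt i := rfl

lemma valExt_eq_boundaryExt (τ : Perm (Fin m)) (π : Perm (Fin n)) (i : Fin m → Fin n) :
    valExt τ π i = boundaryExt (π ∘ i ∘ τ.symm) := rfl

lemma boundaryExt_zero (g : Fin m → Fin n) : boundaryExt g 0 = 0 := by
  simp [boundaryExt]

lemma boundaryExt_succ (g : Fin m → Fin n) (c : Fin m) : boundaryExt g (c + 1) = g c + 1 := by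
  simp [boundaryExt, Nat.succ_le_of_lt c.isLt]

lemma boundaryExt_strictMonoOn {g : Fin m → Fin n} (hg : StrictMono g) :
    StrictMonoOn (boundaryExt g) (Set.Iic (m + 1)) := by
  refine strictMonoOn_Iic_of_lt_succ fun c hc => ?_
  rw [Order.succ_eq_add_one]
  rcases c with _ | c
  · rw [boundaryExt_zero]
    unfold boundaryExt
    split_ifs <;> simp_all
  · rw [boundaryExt_succ g ⟨c, by omega⟩]
    by_cases hcm : c + 1 < m
    · rw [boundaryExt_succ g ⟨c + 1, hcm⟩]
      exact Nat.succ_lt_succ (hg (Fin.mk_lt_mk.2 c.lt_succ_self))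
    · have : boundaryExt g (c + 1 + 1) = n + 1 := by unfold boundaryExt; split_ifs <;> omega
      rw [this]
      have := (g ⟨c, by omega⟩).isLt
      omega

lemma forall_not_mem_Ioo_iff {f : ℕ → ℕ} {x b : ℕ} (hf : ∀ c ≤ b, f c < f (c + 1))
    (h0 : f 0 < x) (hx : ∀ c ∈ Icc 1 (b + 1), x ≠ f c) :
    (∀ c ≤ b, ¬(f c < x ∧ x < f (c + 1))) ↔ f (b + 1) < x := by
  induction b with
  | zero =>
    have := hx 1 (by simp)
    simp only [nonpos_iff_eq_zero, forall_eq, h0, true_and, not_lt, zero_add]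
    omega
  | succ b ih =>
    have hb := hx (b + 1 + 1) (by simp)
    have hfb := hf (b + 1) le_rfl
    simp only [Nat.le_add_one_iff, or_imp, forall_and, forall_eq]
    rw [ih (fun c hc => hf c (by omega)) (fun c hc => hx c (by simp at hc ⊢; omega))]
    omega

variable {τ : Perm (Fin m)} {π : Perm (Fin n)} {i : Fin m → Fin n}

def InColumn (i : Fin m → Fin n) (a : ℕ) (j : Fin n) : Prop :=
  posExt i a < j + 1 ∧ j + 1 < posExt i (a + 1)

lemma InColumn.ne (hi : StrictMono i) {a : ℕ} (ha : a ≤ m) {j : Fin n} (hj : InColumn i a j)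
    (k : Fin m) : j ≠ i k := by
  rintro rfl
  obtain ⟨h1, h2⟩ := hj
  rw [posExt_eq_boundaryExt, ← boundaryExt_succ] at h1 h2
  have := (boundaryExt_strictMonoOn hi).lt_iff_lt (a := a) (b := k + 1) (by simp; omega)
    (by simp)
  have := (boundaryExt_strictMonoOn hi).lt_iff_lt (a := k + 1) (b := a + 1) (by simp)
    (by simp; omega)
  omega

lemma InColumn.valExt_ne (hi : StrictMono i) {a : ℕ} (ha : a ≤ m) {j : Fin n}
    (hj : InColumn i a j) {c : ℕ} (hc : c ∈ Icc 1 m) : (π j : ℕ) + 1 ≠ valExt τ π i c := by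
  obtain ⟨c, rfl⟩ : ∃ c' : Fin m, c = c' + 1 := ⟨⟨c - 1, by simp at hc; omega⟩, by simp at hc ⊢; omega⟩
  rw [valExt_eq_boundaryExt, boundaryExt_succ]
  simpa [Fin.val_eq_val] using hj.ne hi ha _

/-- An entry inside a column lies on no row boundary, so shaded cells stacked in one column
merge into a single box. -/
lemma InColumn.forall_not_mem_rows_iff (hi : StrictMono i) (hw : StrictMono (π ∘ i ∘ τ.symm))
    {a b : ℕ} (ha : a ≤ m) (hb : b < m) {j : Fin n} (hj : InColumn i a j) :
    (∀ c ≤ b, ¬(valExt τ π i c < π j + 1 ∧ (π j : ℕ) + 1 < valExt τ π i (c + 1))) ↔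
      valExt τ π i (b + 1) < π j + 1 := by
  rw [valExt_eq_boundaryExt]
  refine forall_not_mem_Ioo_iff (fun c hc => ?_) (by rw [boundaryExt_zero]; omega)
    fun c hc => hj.valExt_ne hi ha (by simp at hc ⊢; omega)
  exact boundaryExt_strictMonoOn hw (by simp; omega) (by simp; omega) (by omega)

lemma strictMono_comp_symm_iff {α : Type*} [LinearOrder α] (f : Fin m → α) (τ : Perm (Fin m)) :
    StrictMono (f ∘ τ.symm) ↔ ∀ a b, f a < f b ↔ τ a < τ b := by
  refine ⟨fun h a b => ?_, fun h a b hab => ?_⟩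
  · simpa using h.lt_iff_lt (a := τ a) (b := τ b)
  · simpa [h] using hab

def meshShading : Set (ℕ × ℕ) :=
  {(0, 0), (0, 1), (2, 0), (2, 1), (2, 2), (3, 0), (3, 1), (3, 2)}

lemma mem_meshShading {a b : ℕ} :
    (a, b) ∈ meshShading ↔ a = 0 ∧ b ≤ 1 ∨ (a = 2 ∨ a = 3) ∧ b ≤ 2 := by
  simp only [meshShading, Set.mem_insert_iff, Set.mem_singleton_iff, Prod.mk.injEq]
  omega

lemma inColumn_zero_iff {i : Fin 3 → Fin n} {j : Fin n} : InColumn i 0 j ↔ j < i 0 := by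
  change 0 < (j : ℕ) + 1 ∧ (j : ℕ) + 1 < i 0 + 1 ↔ _
  rw [Fin.lt_def]
  omega

lemma inColumn_two_iff {i : Fin 3 → Fin n} {j : Fin n} : InColumn i 2 j ↔ i 1 < j ∧ j < i 2 := by
  change (i 1 : ℕ) + 1 < (j : ℕ) + 1 ∧ (j : ℕ) + 1 < i 2 + 1 ↔ _
  rw [Fin.lt_def, Fin.lt_def]
  omega

lemma inColumn_three_iff {i : Fin 3 → Fin n} {j : Fin n} : InColumn i 3 j ↔ i 2 < j := by
  change (i 2 : ℕ) + 1 < (j : ℕ) + 1 ∧ (j : ℕ) + 1 < n + 1 ↔ _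
  rw [Fin.lt_def]
  have := j.isLt
  omega

theorem isMeshOcc_meshShading_iff {τ : Perm (Fin 3)} {π : Perm (Fin n)} {i : Fin 3 → Fin n} :
    IsMeshOcc τ meshShading π i ↔ StrictMono i ∧ StrictMono (π ∘ i ∘ τ.symm) ∧
      (∀ j < i 0, π (i (τ.symm 1)) < π j) ∧ ∀ j, i 1 < j → j ≠ i 2 → π (i (τ.symm 2)) < π j := by
  rw [IsMeshOcc, ← strictMono_comp_symm_iff]
  refine and_congr_right fun hi => and_congr_right fun hw => ?_
  have hv2 : valExt τ π i 2 = π (i (τ.symm 1)) + 1 := rfl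
  have hv3 : valExt τ π i 3 = π (i (τ.symm 2)) + 1 := rfl
  have cells {a b : ℕ} (ha : a ≤ 3) (hb : b < 3) {j : Fin n} (hj : InColumn i a j) :=
    hj.forall_not_mem_rows_iff hi hw ha hb (τ := τ)
  constructor
  · intro h
    have cleared {a b : ℕ} (ha : a ≤ 3) (hb : b < 3) (hab : ∀ c ≤ b, (a, c) ∈ meshShading)
        {j : Fin n} (hj : InColumn i a j) : valExt τ π i (b + 1) < π j + 1 :=
      (cells ha hb hj).1 fun c hc hcell => h a c (hab c hc) ⟨j, hj.1, hj.2, hcell⟩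
    refine ⟨fun j hj => ?_, fun j hj1 hj2 => ?_⟩
    · have := cleared (a := 0) (b := 1) (by norm_num) (by norm_num)
        (fun c hc => mem_meshShading.2 (by omega)) (inColumn_zero_iff.2 hj)
      rw [hv2] at this
      exact Fin.lt_def.2 (by omega)
    · have := (lt_or_gt_of_ne hj2).elim
        (fun hj3 => cleared (a := 2) (b := 2) (by norm_num) (by norm_num)
          (fun c hc => mem_meshShading.2 (by omega)) (inColumn_two_iff.2 ⟨hj1, hj3⟩))
        (fun hj3 => cleared (a := 3) (b := 2) (by norm_num) (by norm_num)
          (fun c hc => mem_meshShading.2 (by omega)) (inColumn_three_iff.2 hj3))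
      rw [hv3] at this
      exact Fin.lt_def.2 (by omega)
  · rintro ⟨h0, h23⟩ a b hab ⟨j, hj1, hj2, hcell⟩
    have hcol : InColumn i a j := ⟨hj1, hj2⟩
    rcases mem_meshShading.1 hab with ⟨rfl, hb⟩ | ⟨ha, hb⟩
    · refine (cells (b := 1) (by norm_num) (by norm_num) hcol).2 ?_ b hb hcell
      rw [hv2]
      exact Nat.succ_lt_succ (h0 j (inColumn_zero_iff.1 hcol))
    · refine (cells (b := 2) (by omega) (by norm_num) hcol).2 ?_ b hb hcell
      rw [hv3]
      have h12 : i 1 < i 2 := hi (by decide)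
      refine Nat.succ_lt_succ (h23 j ?_ ?_) <;> rcases ha with rfl | rfl
      · exact (inColumn_two_iff.1 hcol).1
      · exact h12.trans (inColumn_three_iff.1 hcol)
      · exact (inColumn_two_iff.1 hcol).2.ne
      · exact (inColumn_three_iff.1 hcol).ne'

end Mesh

section Occurrences

variable {π : Perm (Fin n)}

lemma strictMono_fin_three_iff {α : Type*} [Preorder α] {f : Fin 3 → α} :
    StrictMono f ↔ f 0 < f 1 ∧ f 1 < f 2 := by
  rw [Fin.strictMono_iff_lt_succ, Fin.forall_fin_two]
  rfl

lemma isMeshOcc_perm123_iff {i : Fin 3 → Fin n} :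
    IsMeshOcc perm123 meshShading π i ↔ (i 0 < i 1 ∧ i 1 < i 2) ∧
      (π (i 0) < π (i 1) ∧ π (i 1) < π (i 2)) ∧
      (∀ j < i 0, π (i 1) < π j) ∧ ∀ j, i 1 < j → j ≠ i 2 → π (i 2) < π j := by
  rw [isMeshOcc_meshShading_iff, strictMono_fin_three_iff, strictMono_fin_three_iff]
  rfl

lemma isMeshOcc_perm132_iff {i : Fin 3 → Fin n} :
    IsMeshOcc perm132 meshShading π i ↔ (i 0 < i 1 ∧ i 1 < i 2) ∧
      (π (i 0) < π (i 2) ∧ π (i 2) < π (i 1)) ∧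
      (∀ j < i 0, π (i 2) < π j) ∧ ∀ j, i 1 < j → j ≠ i 2 → π (i 1) < π j := by
  rw [isMeshOcc_meshShading_iff, strictMono_fin_three_iff, strictMono_fin_three_iff]
  rfl

lemma eq_of_first_lt {w a b : Fin n} (ha : π a < w) (ha' : ∀ j < a, w < π j) (hb : π b < w)
    (hb' : ∀ j < b, w < π j) : a = b := by
  by_contra hab
  rcases lt_or_gt_of_ne hab with h | h
  · exact (hb' a h).asymm ha
  · exact (ha' b h).asymm hb

lemma eq_of_argmin_after {p a b : Fin n} (hpa : p < a) (ha : ∀ j, p < j → j ≠ a → π a < π j)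
    (hpb : p < b) (hb : ∀ j, p < j → j ≠ b → π b < π j) : a = b := by
  by_contra hab
  exact (ha b hpb (Ne.symm hab)).asymm (hb a hpa hab)

lemma exists_first_lt {j₀ q : Fin n} (h : π j₀ < π q) (hq : j₀ < q) :
    ∃ i₀ ≤ j₀, π i₀ < π q ∧ ∀ j < i₀, π q < π j := by
  let s : Finset (Fin n) := {k | π k < π q}
  have hs : j₀ ∈ s := by simpa [s]
  refine ⟨s.min' ⟨j₀, hs⟩, s.min'_le _ hs, by simpa [s] using s.min'_mem ⟨j₀, hs⟩,
    fun j hj => ?_⟩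
  have hjs : j ∉ s := fun h => (s.min'_le j h).not_gt hj
  have hjq : j ≠ q := (hj.trans ((s.min'_le _ hs).trans_lt hq)).ne
  simp only [s, mem_filter, mem_univ, true_and, not_lt] at hjs
  exact hjs.lt_of_ne (π.injective.ne hjq.symm)

lemma exists_argmin_after {p : Fin n} (hp : (p : ℕ) + 1 < n) :
    ∃ a, p < a ∧ ∀ j, p < j → j ≠ a → π a < π j := by
  obtain ⟨a, ha, hmin⟩ := ({k | p < k} : Finset (Fin n)).exists_min_image π
    ⟨⟨p + 1, hp⟩, mem_filter.2 ⟨mem_univ _, Fin.lt_def.2 (Nat.lt_succ_self _)⟩⟩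
  simp only [mem_filter, mem_univ, true_and] at ha hmin
  exact ⟨a, ha, fun j hj hja => (hmin j hj).lt_of_ne (π.injective.ne hja.symm)⟩

lemma exists_lehmer_eq_zero {j₀ p : Fin n} (hj₀ : j₀ < p) (h : ∀ k, p ≤ k → π j₀ < π k) :
    ∃ j < p, π.lehmer j = 0 := by
  obtain ⟨j, hj, hmin⟩ := ({k | k < p} : Finset (Fin n)).exists_min_image π ⟨j₀, by simpa⟩
  simp only [mem_filter, mem_univ, true_and] at hj hmin
  refine ⟨j, hj, Perm.lehmer_eq_zero_iff.2 fun k hjk => ?_⟩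
  rcases lt_or_ge k p with hk | hk
  · exact (hmin k hk).lt_of_ne (π.injective.ne hjk.ne)
  · exact (hmin j₀ hj₀).trans_lt (h k hk)

lemma exists_isMeshOcc_perm123_iff (p : Fin n) :
    (∃ i, IsMeshOcc perm123 meshShading π i ∧ i 1 = p) ↔
      ZeroCodeNotLast (n - p) (π.lehmer p) ∧ ∃ j < p, π.lehmer j = 0 := by
  simp only [isMeshOcc_perm123_iff, ZeroCodeNotLast]
  constructor
  · rintro ⟨i, ⟨⟨h01, h12⟩, ⟨v01, v12⟩, -, hafter⟩, rfl⟩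
    have hlast : ∀ k, i 1 < k → π (i 1) < π k := fun k hk => by
      by_cases hk2 : k = i 2
      · exact hk2 ▸ v12
      · exact v12.trans (hafter k hk hk2)
    refine ⟨⟨?_, Perm.lehmer_eq_zero_iff.2 hlast⟩, exists_lehmer_eq_zero h01 fun k hk => ?_⟩
    · have := Fin.lt_def.1 h12
      have := (i 2).isLt
      omega
    · rcases hk.eq_or_lt with rfl | hk
      · exact v01
      · exact v01.trans (hlast k hk)
  · rintro ⟨⟨hp, hlast⟩, j, hjp, hj⟩
    obtain ⟨i₀, hi₀j, hv, hbefore⟩ :=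
      exists_first_lt (Perm.lehmer_eq_zero_iff.1 hj p hjp) hjp
    obtain ⟨i₂, hpi₂, hafter⟩ := exists_argmin_after (π := π) (p := p) (by omega)
    exact ⟨![i₀, p, i₂], ⟨⟨hi₀j.trans_lt hjp, hpi₂⟩,
      ⟨hv, Perm.lehmer_eq_zero_iff.1 hlast i₂ hpi₂⟩, hbefore, hafter⟩, rfl⟩

lemma exists_isMeshOcc_perm132_iff (p : Fin n) :
    (∃ i, IsMeshOcc perm132 meshShading π i ∧ i 1 = p) ↔
      OneCode (n - p) (π.lehmer p) ∧ ∃ j < p, π.lehmer j = 0 := by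
  simp only [isMeshOcc_perm132_iff, OneCode, Perm.lehmer_eq_one_iff]
  constructor
  · rintro ⟨i, ⟨⟨h01, h12⟩, ⟨v02, v21⟩, -, hafter⟩, rfl⟩
    refine ⟨⟨i 2, h12, v21, hafter⟩, exists_lehmer_eq_zero h01 fun k hk => ?_⟩
    rcases hk.eq_or_lt with rfl | hk
    · exact v02.trans v21
    · by_cases hk2 : k = i 2
      · exact hk2 ▸ v02
      · exact (v02.trans v21).trans (hafter k hk hk2)
  · rintro ⟨⟨q, hpq, vqp, hafter⟩, j, hjp, hj⟩
    obtain ⟨i₀, hi₀j, hv, hbefore⟩ :=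
      exists_first_lt (Perm.lehmer_eq_zero_iff.1 hj q (hjp.trans hpq)) (hjp.trans hpq)
    exact ⟨![i₀, p, q], ⟨⟨hi₀j.trans_lt hjp, hpq⟩, ⟨hv, vqp⟩, hbefore, hafter⟩, rfl⟩

lemma IsMeshOcc.perm123_eq {i i' : Fin 3 → Fin n} (h : IsMeshOcc perm123 meshShading π i)
    (h' : IsMeshOcc perm123 meshShading π i') (h1 : i 1 = i' 1) : i = i' := by
  obtain ⟨⟨-, h12⟩, ⟨v01, -⟩, hbefore, hafter⟩ := isMeshOcc_perm123_iff.1 h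
  obtain ⟨⟨-, h12'⟩, ⟨v01', -⟩, hbefore', hafter'⟩ := isMeshOcc_perm123_iff.1 h'
  rw [← h1] at h12' v01' hbefore' hafter'
  have h2 := eq_of_argmin_after h12 hafter h12' hafter'
  have h0 := eq_of_first_lt v01 hbefore v01' hbefore'
  ext c
  fin_cases c <;> simp [h0, h1, h2]

lemma IsMeshOcc.perm132_eq {i i' : Fin 3 → Fin n} (h : IsMeshOcc perm132 meshShading π i)
    (h' : IsMeshOcc perm132 meshShading π i') (h1 : i 1 = i' 1) : i = i' := by
  obtain ⟨⟨-, h12⟩, ⟨v02, v21⟩, hbefore, hafter⟩ := isMeshOcc_perm132_iff.1 h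
  obtain ⟨⟨-, h12'⟩, ⟨v02', v21'⟩, hbefore', hafter'⟩ := isMeshOcc_perm132_iff.1 h'
  rw [← h1] at h12' v21' hafter'
  have h2 := eq_of_argmin_after h12 (fun j hj hj2 => v21.trans (hafter j hj hj2))
    h12' (fun j hj hj2 => v21'.trans (hafter' j hj hj2))
  rw [← h2] at v02' hbefore'
  have h0 := eq_of_first_lt v02 hbefore v02' hbefore'
  ext c
  fin_cases c <;> simp [h0, h1, h2]

lemma occ_eq_card_of_injOn {m : ℕ} {τ : Perm (Fin m)} {R : Set (ℕ × ℕ)} (c : Fin m)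
    (hinj : ∀ i i', IsMeshOcc τ R π i → IsMeshOcc τ R π i' → i c = i' c → i = i') :
    occ τ R π = Nat.card {p // ∃ i, IsMeshOcc τ R π i ∧ i c = p} :=
  Nat.card_congr <| .ofBijective (fun i => ⟨i.1 c, i.1, i.2, rfl⟩)
    ⟨fun i i' h => Subtype.ext (hinj _ _ i.2 i'.2 (congrArg Subtype.val h)),
      fun ⟨_, i, hi, hp⟩ => ⟨⟨i, hi⟩, Subtype.ext hp⟩⟩

lemma occ_perm123 (π : Perm (Fin n)) :
    occ perm123 meshShading π = codeCountAfterMin ZeroCodeNotLast π := by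
  rw [occ_eq_card_of_injOn 1 fun _ _ => IsMeshOcc.perm123_eq, codeCountAfterMin,
    ← Fintype.card_subtype, ← Nat.card_eq_fintype_card]
  exact Nat.card_congr (Equiv.subtypeEquivRight exists_isMeshOcc_perm123_iff)

lemma occ_perm132 (π : Perm (Fin n)) :
    occ perm132 meshShading π = codeCountAfterMin OneCode π := by
  rw [occ_eq_card_of_injOn 1 fun _ _ => IsMeshOcc.perm132_eq, codeCountAfterMin,
    ← Fintype.card_subtype, ← Nat.card_eq_fintype_card]
  exact Nat.card_congr (Equiv.subtypeEquivRight exists_isMeshOcc_perm132_iff)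

end Occurrences

lemma card_occ_eq_countAfterMin (n k ℓ : ℕ) :
    Nat.card {π : Perm (Fin n) //
      occ perm123 meshShading π = k ∧ occ perm132 meshShading π = ℓ} = countAfterMin n k ℓ := by
  simp only [occ_perm123, occ_perm132, Nat.card_eq_fintype_card, Fintype.card_subtype]
  rfl

theorem statement_17 :
    (∀ n : ℕ, 2 ≤ n → ∀ k ℓ : ℕ,
      (k = 0 ∧ ℓ = 0 →
        Nat.card {π : Equiv.Perm (Fin n) //
            occ perm123 ({(0, 0), (0, 1), (2, 0), (2, 1), (2, 2), (3, 0), (3, 1), (3, 2)} : Set (ℕ × ℕ)) π = k ∧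
            occ perm132 ({(0, 0), (0, 1), (2, 0), (2, 1), (2, 2), (3, 0), (3, 1), (3, 2)} : Set (ℕ × ℕ)) π = ℓ} =
          2 * Nat.factorial (n - 1)) ∧
      (¬(k = 0 ∧ ℓ = 0) →
        Nat.card {π : Equiv.Perm (Fin n) //
            occ perm123 ({(0, 0), (0, 1), (2, 0), (2, 1), (2, 2), (3, 0), (3, 1), (3, 2)} : Set (ℕ × ℕ)) π = k ∧
            occ perm132 ({(0, 0), (0, 1), (2, 0), (2, 1), (2, 2), (3, 0), (3, 1), (3, 2)} : Set (ℕ × ℕ)) π = ℓ} =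
          (k + ℓ).choose k *
            ∑ i ∈ Finset.Icc 2 (n - 1),
              (n - 1).choose i * Nat.factorial (n - 1 - i) * stirlingFirst (i - 1) (k + ℓ))) ∧
    JointlyEquidistributed perm123 ({(0, 0), (0, 1), (2, 0), (2, 1), (2, 2), (3, 0), (3, 1), (3, 2)} : Set (ℕ × ℕ))
      perm132 ({(0, 0), (0, 1), (2, 0), (2, 1), (2, 2), (3, 0), (3, 1), (3, 2)} : Set (ℕ × ℕ)) := by
  rw [show ({(0, 0), (0, 1), (2, 0), (2, 1), (2, 2), (3, 0), (3, 1), (3, 2)} : Set (ℕ × ℕ)) =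
    meshShading from rfl]
  refine ⟨fun n hn k ℓ => ?_, fun n k ℓ => ?_⟩
  · obtain ⟨m, rfl⟩ := Nat.exists_eq_add_of_le' hn
    simp only [card_occ_eq_countAfterMin]
    exact ⟨fun ⟨hk, hℓ⟩ => hk ▸ hℓ ▸ countAfterMin_add_two_zero_zero m,
      countAfterMin_add_two m k ℓ⟩
  · rw [card_occ_eq_countAfterMin, card_occ_eq_countAfterMin, countAfterMin_comm]
end

section
/- Let S = {(0,1),(0,2),(1,1),(1,2),(2,2),(3,0),(3,1),(3,2),(3,3)}. The mesh patterns q1 = (123, S) and q2 = (132, S) are jointly equidistributed. -/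
/-!
The shaded boxes are the whole column right of the last letter, the whole row between the two
larger values, and the two boxes left of the second letter between the two smaller values. Hence in
an occurrence of either pattern the last letter is the last entry `π (n+1)`, the two larger values
are consecutive, and the first letter is the entry of largest value below the middle value among
those preceding the second letter. So each pattern occurs at most once: `(123, S)` occurs iff the
value `π (n+1) - 1` is preceded by a smaller entry, and `(132, S)` occurs iff `π (n+1) + 1` is
preceded by an entry smaller than `π (n+1)`. Exchanging the values `π (n+1)` and `π (n+1) - 1` maps
the first set of permutations bijectively onto the second. For statistics with values in `{0, 1}`,
equal numbers of ones already force the joint distribution to be symmetric.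
-/

section MaxBelowBefore

variable {ι α : Type*} [LinearOrder ι] [LinearOrder α] {f : ι → α} {k j j' : ι} {t : α}

def IsMaxBelowBefore (f : ι → α) (k : ι) (t : α) (j : ι) : Prop :=
  j < k ∧ f j < t ∧ ∀ x < k, f j < f x → t ≤ f x

theorem IsMaxBelowBefore.unique (hf : Function.Injective f) (h : IsMaxBelowBefore f k t j)
    (h' : IsMaxBelowBefore f k t j') : j = j' := by
  refine hf (le_antisymm (not_lt.1 fun hlt => ?_) (not_lt.1 fun hlt => ?_))
  · exact (h'.2.2 j h.1 hlt).not_gt h.2.1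
  · exact (h.2.2 j' h'.1 hlt).not_gt h'.2.1

theorem exists_isMaxBelowBefore [Finite ι] (hjk : j < k) (hjt : f j < t) :
    ∃ j₀, IsMaxBelowBefore f k t j₀ := by
  have : Nonempty {x // x < k ∧ f x < t} := ⟨⟨j, hjk, hjt⟩⟩
  obtain ⟨⟨j₀, hj₀k, hj₀t⟩, hmax⟩ := Finite.exists_max fun x : {x // x < k ∧ f x < t} => f x
  exact ⟨j₀, hj₀k, hj₀t, fun x hx hlt => not_lt.1 fun hxt => (hmax ⟨x, hx, hxt⟩).not_gt hlt⟩

end MaxBelowBefore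

theorem lt_or_between_of_forall_ne {α : Type*} [LinearOrder α] {i : Fin 3 → α} {x : α}
    (hx : ∀ a, x ≠ i a) : x < i 0 ∨ (i 0 < x ∧ x < i 1) ∨ (i 1 < x ∧ x < i 2) ∨ i 2 < x := by
  rcases lt_or_gt_of_ne (hx 0) with h0 | h0 <;> rcases lt_or_gt_of_ne (hx 1) with h1 | h1 <;>
    rcases lt_or_gt_of_ne (hx 2) with h2 | h2 <;> simp_all

theorem card_and_comm_of_le_one {α : Type*} [Fintype α] {f g : α → ℕ} (hf : ∀ a, f a ≤ 1)
    (hg : ∀ a, g a ≤ 1) (h : Nat.card {a // f a = 1} = Nat.card {a // g a = 1}) (k ℓ : ℕ) :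
    Nat.card {a // f a = k ∧ g a = ℓ} = Nat.card {a // f a = ℓ ∧ g a = k} := by
  classical
  have hcard₁₀ : Nat.card {a // f a = 1 ∧ g a = 0} = Nat.card {a // f a = 0 ∧ g a = 1} := by
    simp only [Nat.card_eq_fintype_card, Fintype.card_subtype] at h ⊢
    convert Finset.card_sdiff_comm h using 2 <;> ext a <;>
      simp only [Finset.mem_filter, Finset.mem_univ, true_and, Finset.mem_sdiff] <;> grind
  rcases eq_or_ne k ℓ with rfl | hkℓ
  · rfl
  by_cases hk : k ≤ 1 ∧ ℓ ≤ 1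
  · obtain ⟨rfl, rfl⟩ | ⟨rfl, rfl⟩ : (k = 1 ∧ ℓ = 0) ∨ (k = 0 ∧ ℓ = 1) := by omega
    exacts [hcard₁₀, hcard₁₀.symm]
  · have hempty : ∀ k ℓ, ¬ (k ≤ 1 ∧ ℓ ≤ 1) → IsEmpty {a // f a = k ∧ g a = ℓ} := fun k ℓ hkℓ =>
      ⟨fun ⟨a, hfa, hga⟩ => hkℓ ⟨hfa ▸ hf a, hga ▸ hg a⟩⟩
    have := hempty k ℓ hk
    have := hempty ℓ k (by omega)
    simp only [Nat.card_of_isEmpty]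

theorem occ_le_one {m N : ℕ} {τ : Equiv.Perm (Fin m)} {R : Set (ℕ × ℕ)} {π : Equiv.Perm (Fin N)}
    [Subsingleton {i // IsMeshOcc τ R π i}] : occ τ R π ≤ 1 :=
  Finite.card_le_one_iff_subsingleton.2 ‹_›

theorem occ_eq_one_iff {m N : ℕ} {τ : Equiv.Perm (Fin m)} {R : Set (ℕ × ℕ)} {π : Equiv.Perm (Fin N)}
    [Subsingleton {i // IsMeshOcc τ R π i}] : occ τ R π = 1 ↔ ∃ i, IsMeshOcc τ R π i := by
  rw [occ, Nat.card_eq_one_iff_unique, and_iff_right ‹_›, nonempty_subtype]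

theorem occ_eq_zero_of_fin_zero {m : ℕ} (τ : Equiv.Perm (Fin (m + 1))) (R : Set (ℕ × ℕ))
    (π : Equiv.Perm (Fin 0)) : occ τ R π = 0 := by
  simp [occ]

def shadedBoxes : Set (ℕ × ℕ) :=
  {(0, 1), (0, 2), (1, 1), (1, 2), (2, 2), (3, 0), (3, 1), (3, 2), (3, 3)}

section ShadedBoxes

variable {n : ℕ}

theorem isMeshOcc_shadedBoxes_iff (τ : Equiv.Perm (Fin 3)) (π : Equiv.Perm (Fin (n + 1)))
    (i : Fin 3 → Fin (n + 1)) :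
    IsMeshOcc τ shadedBoxes π i ↔ StrictMono i ∧ (∀ a b, π (i a) < π (i b) ↔ τ a < τ b) ∧
      i 2 = Fin.last n ∧ (π (i (τ.symm 1)) : ℕ) + 1 = π (i (τ.symm 2)) ∧
      ∀ x < i 1, π (i (τ.symm 0)) < π x → π (i (τ.symm 1)) ≤ π x := by
  simp only [IsMeshOcc, shadedBoxes, Set.mem_insert_iff, Set.mem_singleton_iff, Prod.mk.injEq,
    or_imp, forall_and, and_imp]
  simp only [posExt, Order.lt_add_one_iff, le_add_iff_nonneg_left, zero_le, Order.add_one_le_iff,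
    true_and, add_tsub_cancel_right, Nat.add_eq_zero_iff, one_ne_zero, and_false, ↓reduceIte,
    valExt, not_exists, not_and, not_lt, forall_eq_apply_imp_iff, Std.le_refl, Nat.one_le_ofNat,
    and_self, ↓reduceDIte, tsub_self, Fin.zero_eta, Fin.isValue, Fin.val_fin_lt, Nat.one_lt_ofNat,
    Fin.mk_one, add_le_add_iff_right, Fin.val_fin_le, forall_eq, nonpos_iff_eq_zero, and_true,
    Nat.ofNat_pos, forall_const, Nat.reduceLeDiff, Nat.add_one_sub_one, Nat.lt_add_one,
    Fin.reduceFinMk, lt_self_iff_false, and_congr_right_iff]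
  intro hmono hord
  set lo := π (i (τ.symm 0))
  set mid := π (i (τ.symm 1))
  set hi := π (i (τ.symm 2))
  have hlo : lo < mid := (hord _ _).2 (by simp)
  have hmid : mid < hi := (hord _ _).2 (by simp)
  have hoff : ∀ x, (∀ a, x ≠ i a) → π x ≠ lo ∧ π x ≠ mid ∧ π x ≠ hi := fun x hx =>
    ⟨fun h => hx _ (π.injective h), fun h => hx _ (π.injective h), fun h => hx _ (π.injective h)⟩
  have hon : ∀ x, π x ≠ lo → π x ≠ mid → π x ≠ hi → ∀ a, x ≠ i a := by
    rintro x h0 h1 h2 a rfl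
    obtain ⟨b, rfl⟩ := τ.symm.surjective a
    fin_cases b <;> contradiction
  have h01 : i 0 < i 1 := hmono (by decide)
  have h12 : i 1 < i 2 := hmono (by decide)
  constructor
  · rintro ⟨b01, b02, b11, b12, b22, b30, b31, b32, b33⟩
    have hlast : i 2 = Fin.last n := by
      by_contra hne
      have hlt : i 2 < Fin.last n := Fin.lt_last_iff_ne_last.2 hne
      obtain ⟨n0, n1, n2⟩ := hoff (Fin.last n) fun a h => by
        have := hmono.monotone (Fin.le_last a)
        grind
      have := b30 _ hlt (by simp)
      have := b31 _ hlt (by simp)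
      have := b32 _ hlt (by simp)
      have := b33 _ hlt (by simp)
      have := (π (Fin.last n)).isLt
      omega
    have hadj : (mid : ℕ) + 1 = hi := by
      by_contra hne
      set x := π.symm ⟨mid + 1, by omega⟩
      have hx : (π x : ℕ) = mid + 1 := by simp [x]
      rcases lt_or_between_of_forall_ne (hon x (by omega) (by omega) (by omega))
        with h | ⟨h, h'⟩ | ⟨h, h'⟩ | h
      · exact absurd (b02 x h) (by omega)
      · exact absurd (b12 x h h') (by omega)
      · exact absurd (b22 x h h') (by omega)
      · exact absurd (b32 x h (by omega)) (by omega)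
    refine ⟨hlast, hadj, fun x hx hl => le_of_not_gt fun hm => ?_⟩
    rcases lt_or_between_of_forall_ne (hon x hl.ne' hm.ne (hm.trans hmid).ne)
      with h | ⟨h, h'⟩ | ⟨h, -⟩ | h
    · exact absurd (b01 x h hl) (by omega)
    · exact absurd (b11 x h h' hl) (by omega)
    · exact absurd hx (by omega)
    · exact absurd hx (by omega)
  · rintro ⟨hlast, hadj, hleft⟩
    have hafter : ∀ x, ¬ i 2 < x := fun x => hlast ▸ not_lt.2 (Fin.le_last x)
    refine ⟨fun x h hl => ?_, fun x _ _ => by omega, fun x _ h hl => ?_, fun x _ _ _ => by omega,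
      fun x _ _ _ => by omega, fun x h => absurd h (hafter x), fun x h => absurd h (hafter x),
      fun x h => absurd h (hafter x), fun x h => absurd h (hafter x)⟩
    · exact hleft x (h.trans h01) hl
    · exact hleft x h hl

theorem isMeshOcc_perm123_iff_s18 (π : Equiv.Perm (Fin (n + 1))) (i : Fin 3 → Fin (n + 1)) :
    IsMeshOcc perm123 shadedBoxes π i ↔ i 2 = Fin.last n ∧
      (π (i 1) : ℕ) + 1 = π (Fin.last n) ∧ IsMaxBelowBefore π (i 1) (π (i 1)) (i 0) := by
  simp only [perm123, isMeshOcc_shadedBoxes_iff, Equiv.Perm.coe_one, id_eq, Fin.isValue]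
  constructor
  · rintro ⟨hmono, hord, hlast, hadj, hleft⟩
    exact ⟨hlast, hlast ▸ hadj, hmono (by decide), (hord 0 1).2 (by decide), hleft⟩
  · rintro ⟨hlast, hadj, h01, hv01, hleft⟩
    rw [← hlast] at hadj
    have h12 : i 1 < i 2 := lt_of_le_of_ne (hlast ▸ Fin.le_last _) fun h => by
      rw [h] at hadj; omega
    refine ⟨Fin.strictMono_iff_lt_succ.2 ?_, fun a b => ?_, hlast, hadj, hleft⟩
    · simpa [Fin.forall_fin_two] using ⟨h01, h12⟩
    · fin_cases a <;> fin_cases b <;> simp <;> omega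

theorem isMeshOcc_perm132_iff_s18 (π : Equiv.Perm (Fin (n + 1))) (i : Fin 3 → Fin (n + 1)) :
    IsMeshOcc perm132 shadedBoxes π i ↔ i 2 = Fin.last n ∧
      (π (Fin.last n) : ℕ) + 1 = π (i 1) ∧ IsMaxBelowBefore π (i 1) (π (Fin.last n)) (i 0) := by
  have hswap0 : Equiv.swap (1 : Fin 3) 2 0 = 0 := by decide
  simp only [perm132, isMeshOcc_shadedBoxes_iff, Equiv.symm_swap, Equiv.swap_apply_left,
    Equiv.swap_apply_right, hswap0]
  constructor
  · rintro ⟨hmono, hord, hlast, hadj, hleft⟩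
    refine ⟨hlast, hlast ▸ hadj, hmono (by decide), hlast ▸ (hord 0 2).2 (by decide), hlast ▸ hleft⟩
  · rintro ⟨hlast, hadj, h01, hv02, hleft⟩
    rw [← hlast] at hadj hv02 hleft
    have h12 : i 1 < i 2 := lt_of_le_of_ne (hlast ▸ Fin.le_last _) fun h => by
      rw [h] at hadj; omega
    refine ⟨Fin.strictMono_iff_lt_succ.2 ?_, fun a b => ?_, hlast, hadj, hleft⟩
    · simpa [Fin.forall_fin_two] using ⟨h01, h12⟩
    · fin_cases a <;> fin_cases b <;> simp [Equiv.swap_apply_def] <;> omega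

def LowerNeighbourOfLastHasSmallerBefore (π : Equiv.Perm (Fin (n + 1))) : Prop :=
  ∃ j k, j < k ∧ π j < π k ∧ (π k : ℕ) + 1 = π (Fin.last n)

def UpperNeighbourOfLastHasSmallerBefore (π : Equiv.Perm (Fin (n + 1))) : Prop :=
  ∃ j k, j < k ∧ π j < π (Fin.last n) ∧ (π (Fin.last n) : ℕ) + 1 = π k

instance (π : Equiv.Perm (Fin (n + 1))) :
    Subsingleton {i // IsMeshOcc perm123 shadedBoxes π i} := by
  refine ⟨fun ⟨i, hi⟩ ⟨i', hi'⟩ => Subtype.ext ?_⟩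
  obtain ⟨h2, hadj, hmax⟩ := (isMeshOcc_perm123_iff_s18 π i).1 hi
  obtain ⟨h2', hadj', hmax'⟩ := (isMeshOcc_perm123_iff_s18 π i').1 hi'
  have h1 : i 1 = i' 1 := π.injective (Fin.ext (by omega))
  rw [h1] at hmax
  have h0 := hmax.unique π.injective hmax'
  funext a
  fin_cases a <;> simp [h0, h1, h2, h2']

instance (π : Equiv.Perm (Fin (n + 1))) :
    Subsingleton {i // IsMeshOcc perm132 shadedBoxes π i} := by
  refine ⟨fun ⟨i, hi⟩ ⟨i', hi'⟩ => Subtype.ext ?_⟩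
  obtain ⟨h2, hadj, hmax⟩ := (isMeshOcc_perm132_iff_s18 π i).1 hi
  obtain ⟨h2', hadj', hmax'⟩ := (isMeshOcc_perm132_iff_s18 π i').1 hi'
  have h1 : i 1 = i' 1 := π.injective (Fin.ext (by omega))
  rw [h1] at hmax
  have h0 := hmax.unique π.injective hmax'
  funext a
  fin_cases a <;> simp [h0, h1, h2, h2']

theorem occ_perm123_eq_one_iff (π : Equiv.Perm (Fin (n + 1))) :
    occ perm123 shadedBoxes π = 1 ↔ LowerNeighbourOfLastHasSmallerBefore π := by
  rw [occ_eq_one_iff]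
  constructor
  · rintro ⟨i, hi⟩
    obtain ⟨-, hadj, hi0, hv0, -⟩ := (isMeshOcc_perm123_iff_s18 π i).1 hi
    exact ⟨i 0, i 1, hi0, hv0, hadj⟩
  · rintro ⟨j, k, hjk, hjv, hadj⟩
    obtain ⟨j₀, hj₀⟩ := exists_isMaxBelowBefore hjk hjv
    exact ⟨![j₀, k, Fin.last n], (isMeshOcc_perm123_iff_s18 π _).2 ⟨rfl, hadj, hj₀⟩⟩

theorem occ_perm132_eq_one_iff (π : Equiv.Perm (Fin (n + 1))) :
    occ perm132 shadedBoxes π = 1 ↔ UpperNeighbourOfLastHasSmallerBefore π := by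
  rw [occ_eq_one_iff]
  constructor
  · rintro ⟨i, hi⟩
    obtain ⟨-, hadj, hi0, hv0, -⟩ := (isMeshOcc_perm132_iff_s18 π i).1 hi
    exact ⟨i 0, i 1, hi0, hv0, hadj⟩
  · rintro ⟨j, k, hjk, hjv, hadj⟩
    obtain ⟨j₀, hj₀⟩ := exists_isMaxBelowBefore hjk hjv
    exact ⟨![j₀, k, Fin.last n], (isMeshOcc_perm132_iff_s18 π _).2 ⟨rfl, hadj, hj₀⟩⟩

/-- `± 1` wraps around in `Fin (n + 1)`; the two maps are inverse to each other regardless, and the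
lemmas below only use them where no wrapping occurs. -/
def swapLastWithLowerNeighbour : Equiv.Perm (Equiv.Perm (Fin (n + 1))) where
  toFun π := Equiv.swap (π (Fin.last n)) (π (Fin.last n) - 1) * π
  invFun σ := Equiv.swap (σ (Fin.last n)) (σ (Fin.last n) + 1) * σ
  left_inv π := by simp [Equiv.swap_comm, Equiv.swap_mul_self_mul]
  right_inv σ := by simp [Equiv.swap_comm, Equiv.swap_mul_self_mul]

theorem upperNeighbour_swapLastWithLowerNeighbour {π : Equiv.Perm (Fin (n + 1))}
    (h : LowerNeighbourOfLastHasSmallerBefore π) :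
    UpperNeighbourOfLastHasSmallerBefore (swapLastWithLowerNeighbour π) := by
  obtain ⟨j, k, hjk, hjv, hadj⟩ := h
  have hk : π (Fin.last n) - 1 = π k := by
    ext; rw [Fin.coe_sub_one, if_neg (fun h => by simp [h] at hadj)]; omega
  have hj₁ : π j ≠ π (Fin.last n) := fun h => by rw [h] at hjv; omega
  have hj₂ : π j ≠ π k := hjv.ne
  refine ⟨j, k, hjk, ?_, ?_⟩ <;>
    simp only [swapLastWithLowerNeighbour, Equiv.coe_fn_mk, hk, Equiv.Perm.coe_mul,
      Function.comp_apply, Equiv.swap_apply_of_ne_of_ne hj₁ hj₂, Equiv.swap_apply_left,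
      Equiv.swap_apply_right] <;> omega

theorem lowerNeighbour_swapLastWithLowerNeighbour_symm {σ : Equiv.Perm (Fin (n + 1))}
    (h : UpperNeighbourOfLastHasSmallerBefore σ) :
    LowerNeighbourOfLastHasSmallerBefore (swapLastWithLowerNeighbour.symm σ) := by
  obtain ⟨j, k, hjk, hjv, hadj⟩ := h
  have hk : σ (Fin.last n) + 1 = σ k := by
    have := (σ k).isLt
    ext; rw [Fin.val_add_one, if_neg (fun h => by simp [h] at hadj; omega)]; omega
  have hj₁ : σ j ≠ σ (Fin.last n) := hjv.ne
  have hj₂ : σ j ≠ σ k := fun h => by rw [h] at hjv; omega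
  refine ⟨j, k, hjk, ?_, ?_⟩ <;>
    simp only [swapLastWithLowerNeighbour, Equiv.symm_mk, Equiv.coe_fn_mk, hk, Equiv.Perm.coe_mul,
      Function.comp_apply, Equiv.swap_apply_of_ne_of_ne hj₁ hj₂, Equiv.swap_apply_left,
      Equiv.swap_apply_right] <;> omega

theorem card_lowerNeighbour_eq_card_upperNeighbour :
    Nat.card {π : Equiv.Perm (Fin (n + 1)) // LowerNeighbourOfLastHasSmallerBefore π} =
      Nat.card {π : Equiv.Perm (Fin (n + 1)) // UpperNeighbourOfLastHasSmallerBefore π} :=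
  Nat.card_congr <| swapLastWithLowerNeighbour.subtypeEquiv fun _ =>
    ⟨upperNeighbour_swapLastWithLowerNeighbour, fun h => by
      simpa using lowerNeighbour_swapLastWithLowerNeighbour_symm h⟩

end ShadedBoxes

theorem statement_18 :
    JointlyEquidistributed perm123 ({(0, 1), (0, 2), (1, 1), (1, 2), (2, 2), (3, 0), (3, 1), (3, 2), (3, 3)} : Set (ℕ × ℕ))
      perm132 ({(0, 1), (0, 2), (1, 1), (1, 2), (2, 2), (3, 0), (3, 1), (3, 2), (3, 3)} : Set (ℕ × ℕ)) := by
  show JointlyEquidistributed perm123 shadedBoxes perm132 shadedBoxes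
  rintro (_ | n) k ℓ
  · simp only [occ_eq_zero_of_fin_zero]
    exact Nat.card_congr (Equiv.subtypeEquivRight fun _ => and_comm)
  · refine card_and_comm_of_le_one (fun _ => occ_le_one) (fun _ => occ_le_one) ?_ k ℓ
    simp only [occ_perm123_eq_one_iff, occ_perm132_eq_one_iff]
    exact card_lowerNeighbour_eq_card_upperNeighbour
end
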